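/- arXiv:2504.14041 — 6 statements merged into one kernel-verified Lean document; each statement's English description precedes it below -/
import Mathlib

section
/- Let (r_t)_{t≥0} be a sequence of monic polynomials in ℂ[T] with deg r_t = t, let t₁,…,t_m be positive integers with D = t₁+⋯+t_m, and let w₁,…,w_m be complex numbers. Then the determinant of the D×D matrix with entries r_t(a)·w_j^a (rows indexed by 0 ≤ a < D, columns indexed by pairs (t,j) with 0 ≤ t < t_j, 1 ≤ j ≤ m) equals k(t₁,…,t_m) · ∏_{j=1}^m w_j^{t_j(t_j−1)/2} · ∏_{1≤i<j≤m} (w_j − w_i)^{t_i t_j}, where k(t₁,…,t_m) = ∏_{j=1}^m ∏_{t=1}^{t_j−1} t!. -/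
open Finset Polynomial

noncomputable def theta : Module.End ℂ (Polynomial ℂ) :=
  (LinearMap.mulLeft ℂ (X : Polynomial ℂ)).comp (Polynomial.derivative)

lemma theta_apply (p : Polynomial ℂ) : theta p = X * derivative p := rfl

lemma theta_X_pow (a : ℕ) : theta (X ^ a : Polynomial ℂ) = (a : ℂ) • X ^ a := by
  rcases Nat.eq_zero_or_pos a with rfl | ha
  · simp [theta_apply]
  · rw [theta_apply, derivative_X_pow, smul_eq_C_mul, mul_left_comm]
    congr 1
    rw [← pow_succ']
    congr 1
    omega

lemma theta_pow_X_pow (u a : ℕ) : (theta ^ u) (X ^ a : Polynomial ℂ) = ((a : ℂ) ^ u) • X ^ a := by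
  induction u with
  | zero => simp
  | succ n ih => rw [pow_succ, Module.End.mul_apply, theta_X_pow, map_smul, ih, smul_smul, ← pow_succ']

lemma aeval_theta_X_pow (p : Polynomial ℂ) (a : ℕ) :
    (Polynomial.aeval theta p) (X ^ a : Polynomial ℂ) = (Polynomial.eval (a : ℂ) p) • X ^ a := by
  rw [Polynomial.aeval_eq_sum_range, Polynomial.eval_eq_sum_range]
  rw [LinearMap.sum_apply, Finset.sum_smul]
  refine Finset.sum_congr rfl fun u _ => ?_
  rw [LinearMap.smul_apply, theta_pow_X_pow, smul_smul]

lemma dvd_theta (v : ℂ) (k : ℕ) (q : Polynomial ℂ) (h : (X - C v) ^ (k + 1) ∣ q) :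
    (X - C v) ^ k ∣ theta q := by
  obtain ⟨g, rfl⟩ := h
  refine ⟨(C ((k : ℂ) + 1) * X * g) + (X - C v) * (X * derivative g), ?_⟩
  rw [theta_apply, derivative_mul, derivative_pow, derivative_X_sub_C, Nat.add_sub_cancel]
  push_cast
  ring

lemma dvd_theta_pow (v : ℂ) (k u : ℕ) (q : Polynomial ℂ) (h : (X - C v) ^ k ∣ q) (hu : u ≤ k) :
    (X - C v) ^ (k - u) ∣ (theta ^ u) q := by
  induction u with
  | zero => simpa using h
  | succ n ih =>
      rw [pow_succ', Module.End.mul_apply]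
      have h1 := ih (by omega)
      have h2 : (X - C v) ^ (k - (n + 1) + 1) ∣ (theta ^ n) q := by
        have hk : k - (n + 1) + 1 = k - n := by omega
        rwa [hk]
      exact dvd_theta v (k - (n + 1)) _ h2

lemma eval_theta_pow_eq_zero (v : ℂ) (k u : ℕ) (q : Polynomial ℂ)
    (h : (X - C v) ^ k ∣ q) (hu : u < k) : Polynomial.eval v ((theta ^ u) q) = 0 := by
  obtain ⟨g, hg⟩ := dvd_theta_pow v k u q h (le_of_lt hu)
  rw [hg, eval_mul, eval_pow, eval_sub, eval_X, eval_C, sub_self, zero_pow (by omega), zero_mul]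

lemma eval_theta_pow_diag (v : ℂ) (s : ℕ) (g : Polynomial ℂ) :
    Polynomial.eval v ((theta ^ s) ((X - C v) ^ s * g)) =
      (s.factorial : ℂ) * v ^ s * Polynomial.eval v g := by
  induction s generalizing g with
  | zero => simp
  | succ n ih =>
      rw [pow_succ, Module.End.mul_apply]
      have key : theta ((X - C v) ^ (n + 1) * g) =
          (X - C v) ^ n * (((n : ℂ) + 1) • (X * g) + (X - C v) * (X * derivative g)) := by
        rw [theta_apply, derivative_mul, derivative_pow, derivative_X_sub_C, Nat.add_sub_cancel,
          smul_eq_C_mul]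
        push_cast
        ring
      rw [key, ih]
      simp only [eval_add, eval_smul, eval_mul, eval_sub, eval_X, eval_C, sub_self, zero_mul,
        add_zero, smul_eq_mul, Nat.factorial_succ]
      push_cast
      ring

lemma eval_aeval_theta_sum (p : Polynomial ℂ) (q : Polynomial ℂ) (v : ℂ) :
    Polynomial.eval v ((Polynomial.aeval theta p) q) =
      ∑ u ∈ Finset.range (p.natDegree + 1), p.coeff u * Polynomial.eval v ((theta ^ u) q) := by
  rw [Polynomial.aeval_eq_sum_range, LinearMap.sum_apply]
  rw [Polynomial.eval_finset_sum]
  refine Finset.sum_congr rfl fun u _ => ?_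
  rw [LinearMap.smul_apply, Polynomial.eval_smul, smul_eq_mul]

lemma eval_aeval_theta_eq_zero (p : Polynomial ℂ) (q : Polynomial ℂ) (v : ℂ) (k : ℕ)
    (hp : p.natDegree < k) (h : (X - C v) ^ k ∣ q) :
    Polynomial.eval v ((Polynomial.aeval theta p) q) = 0 := by
  rw [eval_aeval_theta_sum]
  refine Finset.sum_eq_zero fun u hu => ?_
  rw [eval_theta_pow_eq_zero v k u q h (by simp at hu; omega), mul_zero]

lemma eval_aeval_theta_diag (p : Polynomial ℂ) (s : ℕ) (hp : p.Monic) (hdeg : p.natDegree = s)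
    (v : ℂ) (g : Polynomial ℂ) :
    Polynomial.eval v ((Polynomial.aeval theta p) ((X - C v) ^ s * g)) =
      (s.factorial : ℂ) * v ^ s * Polynomial.eval v g := by
  rw [eval_aeval_theta_sum, hdeg, Finset.sum_range_succ]
  rw [Finset.sum_eq_zero fun u hu => ?_, zero_add]
  · rw [← hdeg, Polynomial.Monic.coeff_natDegree hp, hdeg, one_mul, eval_theta_pow_diag]
  · rw [eval_theta_pow_eq_zero v s u _ (Dvd.intro g rfl) (by simp at hu; omega), mul_zero]

lemma eval_aeval_theta_expand (p q : Polynomial ℂ) (v : ℂ) (D : ℕ) (h : q.natDegree < D) :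
    Polynomial.eval v ((Polynomial.aeval theta p) q) =
      ∑ a ∈ Finset.range D, q.coeff a * (Polynomial.eval (a : ℂ) p * v ^ a) := by
  conv_lhs => rw [Polynomial.as_sum_range' q D h]
  rw [map_sum, Polynomial.eval_finset_sum]
  refine Finset.sum_congr rfl fun a _ => ?_
  rw [← Polynomial.C_mul_X_pow_eq_monomial, ← smul_eq_C_mul, map_smul, aeval_theta_X_pow, Polynomial.eval_smul, Polynomial.eval_smul,
    smul_eq_mul, smul_eq_mul, Polynomial.eval_pow, Polynomial.eval_X]

set_option maxHeartbeats 1600000 in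
/-- Confluent (generalized) Vandermonde determinant: for monic polynomials
`r_t` of degree `t`, multiplicities `t₁,…,t_m ≥ 1` with `D = t₁+⋯+t_m`, and
complex numbers `w₁,…,w_m`, the determinant of the matrix with entries
`r_t(a)·w_j^a` (rows `0 ≤ a < D`, columns indexed lexicographically by pairs
`(j,t)` with `0 ≤ t < t_j`) equals
`k(t₁,…,t_m) · ∏_j w_j^{t_j(t_j−1)/2} · ∏_{i<j} (w_j−w_i)^{t_i t_j}`. -/
theorem confluent_vandermonde_det (m : ℕ) (t : Fin m → ℕ) (ht : ∀ j, 0 < t j)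
    (w : Fin m → ℂ) (r : ℕ → Polynomial ℂ)
    (hmonic : ∀ k, (r k).Monic) (hdeg : ∀ k, (r k).natDegree = k)
    (e : Fin (∑ j, t j) ≃ (Σ j : Fin m, Fin (t j)))
    (he : ∀ c : Fin (∑ j, t j), (c : ℕ) =
      (∑ k ∈ Finset.univ.filter (fun k : Fin m => k < (e c).1), t k) + ((e c).2 : ℕ)) :
    Matrix.det (Matrix.of fun a c : Fin (∑ j, t j) =>
        Polynomial.eval ((a : ℕ) : ℂ) (r ((e c).2 : ℕ)) * w (e c).1 ^ (a : ℕ)) =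
      (∏ j : Fin m, ∏ k ∈ Finset.range (t j), (Nat.factorial k : ℂ)) *
      (∏ j : Fin m, w j ^ (t j * (t j - 1) / 2)) *
      ∏ j : Fin m, ∏ i ∈ Finset.univ.filter (fun i : Fin m => i < j),
        (w j - w i) ^ (t i * t j) := by
  classical
  set S : Fin m → ℕ := fun j => ∑ k ∈ Finset.univ.filter (fun k : Fin m => k < j), t k with hSdef
  set g : Fin m → Polynomial ℂ :=
    fun j => ∏ k ∈ Finset.univ.filter (fun k : Fin m => k < j), (X - C (w k)) ^ (t k) with hgdef
  set q : Fin (∑ j, t j) → Polynomial ℂ :=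
    fun c => (X - C (w (e c).1)) ^ ((e c).2 : ℕ) * g (e c).1 with hqdef
  have hgmonic : ∀ j, (g j).Monic :=
    fun j => monic_prod_of_monic _ _ fun k _ => (monic_X_sub_C _).pow _
  have hgdeg : ∀ j, (g j).natDegree = S j := by
    intro j
    rw [hgdef, hSdef]
    rw [Polynomial.natDegree_prod _ _ (fun k _ => ((monic_X_sub_C (w k)).pow (t k)).ne_zero)]
    simp [Polynomial.natDegree_pow, natDegree_X_sub_C]
  have hqmonic : ∀ c, (q c).Monic := fun c => ((monic_X_sub_C _).pow _).mul (hgmonic _)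
  have hqdeg : ∀ c, (q c).natDegree = (c : ℕ) := by
    intro c
    rw [hqdef, Polynomial.Monic.natDegree_mul ((monic_X_sub_C _).pow _) (hgmonic _),
      Polynomial.natDegree_pow, natDegree_X_sub_C, mul_one, hgdeg, he c]
    simp only [hSdef]
    omega
  set M : Matrix (Fin (∑ j, t j)) (Fin (∑ j, t j)) ℂ := Matrix.of fun a c : Fin (∑ j, t j) =>
    Polynomial.eval ((a : ℕ) : ℂ) (r ((e c).2 : ℕ)) * w (e c).1 ^ (a : ℕ) with hMdef
  set P : Matrix (Fin (∑ j, t j)) (Fin (∑ j, t j)) ℂ := Matrix.of fun a c : Fin (∑ j, t j) => (q c).coeff (a : ℕ) with hPdef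
  set N : Matrix (Fin (∑ j, t j)) (Fin (∑ j, t j)) ℂ := Matrix.of fun c c' : Fin (∑ j, t j) =>
    Polynomial.eval (w (e c).1) ((Polynomial.aeval theta (r ((e c).2 : ℕ))) (q c')) with hNdef
  have hPtri : P.BlockTriangular id := by
    intro a c hca
    show (q c).coeff (a : ℕ) = 0
    exact Polynomial.coeff_eq_zero_of_natDegree_lt (by rw [hqdeg]; exact hca)
  have hdetP : P.det = 1 := by
    rw [Matrix.det_of_upperTriangular hPtri]
    refine Finset.prod_eq_one fun c _ => ?_
    show (q c).coeff (c : ℕ) = 1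
    rw [← hqdeg c]
    exact (hqmonic c).coeff_natDegree
  have hMP : M.transpose * P = N := by
    ext c c'
    simp only [Matrix.mul_apply, Matrix.transpose_apply, hMdef, hPdef, hNdef, Matrix.of_apply]
    rw [eval_aeval_theta_expand _ _ _ (∑ j, t j) (by rw [hqdeg]; exact c'.isLt)]
    rw [← Fin.sum_univ_eq_sum_range
      (fun a => (q c').coeff a * (Polynomial.eval ((a : ℕ) : ℂ) (r ((e c).2 : ℕ)) * w (e c).1 ^ a)) (∑ j, t j)]
    exact Finset.sum_congr rfl fun a _ => by ring
  have hdetMN : M.det = N.det := by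
    rw [← Matrix.det_transpose M, ← mul_one M.transpose.det, ← hdetP, ← Matrix.det_mul, hMP]
  have hSS : ∀ j i : Fin m, j < i → S j + t j ≤ S i := by
    intro j i hji
    rw [hSdef]
    have hsub : insert j (Finset.univ.filter (fun k : Fin m => k < j)) ⊆
        Finset.univ.filter (fun k : Fin m => k < i) := by
      intro k hk
      simp only [Finset.mem_insert, Finset.mem_filter, Finset.mem_univ, true_and] at hk ⊢
      rcases hk with rfl | hk
      · exact hji
      · exact hk.trans hji
    calc S j + t j = ∑ k ∈ insert j (Finset.univ.filter (fun k : Fin m => k < j)), t k := by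
          rw [Finset.sum_insert (by simp), add_comm]
      _ ≤ _ := Finset.sum_le_sum_of_subset hsub
  have hlt : ∀ c c' : Fin (∑ j, t j), c < c' → N c c' = 0 := by
    intro c c' hcc
    show Polynomial.eval (w (e c).1) ((Polynomial.aeval theta (r ((e c).2 : ℕ))) (q c')) = 0
    rcases lt_trichotomy (e c).1 (e c').1 with hji | hji | hji
    · refine eval_aeval_theta_eq_zero _ _ _ (t (e c).1) (by rw [hdeg]; exact (e c).2.isLt) ?_
      refine Dvd.dvd.mul_left ?_ _
      rw [hgdef]
      exact Finset.dvd_prod_of_mem _ (by simp [hji])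
    · have h1 := he c
      have h2 := he c'
      have hsum : (∑ k ∈ Finset.univ.filter (fun k : Fin m => k < (e c).1), t k) =
          ∑ k ∈ Finset.univ.filter (fun k : Fin m => k < (e c').1), t k := by rw [hji]
      have hts : ((e c).2 : ℕ) < ((e c').2 : ℕ) := by
        have := Fin.lt_def.mp hcc
        omega
      refine eval_aeval_theta_eq_zero _ _ _ ((e c').2 : ℕ) (by rw [hdeg]; exact hts) ?_
      rw [hqdef, hji]
      exact dvd_mul_right _ _
    · exfalso
      have hle := hSS _ _ hji
      simp only [hSdef] at hle
      have h1 := he c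
      have h2 := he c'
      have hs2 : ((e c').2 : ℕ) < t (e c').1 := (e c').2.isLt
      have := Fin.lt_def.mp hcc
      omega
  have hdiag : ∀ c : Fin (∑ j, t j), N c c =
      (((e c).2 : ℕ).factorial : ℂ) * w (e c).1 ^ ((e c).2 : ℕ) *
        ∏ k ∈ Finset.univ.filter (fun k : Fin m => k < (e c).1), (w (e c).1 - w k) ^ (t k) := by
    intro c
    show Polynomial.eval (w (e c).1) ((Polynomial.aeval theta (r ((e c).2 : ℕ))) (q c)) = _
    rw [hqdef, eval_aeval_theta_diag (r _) _ (hmonic _) (hdeg _), hgdef]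
    rw [Polynomial.eval_prod]
    congr 1
    exact Finset.prod_congr rfl fun k _ => by
      rw [Polynomial.eval_pow, Polynomial.eval_sub, Polynomial.eval_X, Polynomial.eval_C]
  rw [hdetMN, Matrix.det_of_lowerTriangular N
    (fun i j h => hlt i j (OrderDual.toDual_lt_toDual.mp h))]
  calc (∏ c : Fin (∑ j, t j), N c c)
      = ∏ c : Fin (∑ j, t j),
          (fun σ : Σ j : Fin m, Fin (t j) => ((σ.2 : ℕ).factorial : ℂ) * w σ.1 ^ (σ.2 : ℕ) *
            ∏ k ∈ Finset.univ.filter (fun k : Fin m => k < σ.1), (w σ.1 - w k) ^ (t k)) (e c) :=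
        Finset.prod_congr rfl fun c _ => hdiag c
    _ = ∏ σ : Σ j : Fin m, Fin (t j), ((σ.2 : ℕ).factorial : ℂ) * w σ.1 ^ (σ.2 : ℕ) *
            ∏ k ∈ Finset.univ.filter (fun k : Fin m => k < σ.1), (w σ.1 - w k) ^ (t k) :=
        Equiv.prod_comp e (fun σ : Σ j : Fin m, Fin (t j) =>
          ((σ.2 : ℕ).factorial : ℂ) * w σ.1 ^ (σ.2 : ℕ) *
            ∏ k ∈ Finset.univ.filter (fun k : Fin m => k < σ.1), (w σ.1 - w k) ^ (t k))
    _ = ∏ j : Fin m, ∏ s : Fin (t j), (((s : ℕ).factorial : ℂ) * w j ^ (s : ℕ) *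
            ∏ k ∈ Finset.univ.filter (fun k : Fin m => k < j), (w j - w k) ^ (t k)) := by
        rw [← Finset.univ_sigma_univ, Finset.prod_sigma]
    _ = ∏ j : Fin m, ((∏ k ∈ Finset.range (t j), (Nat.factorial k : ℂ)) *
          w j ^ (t j * (t j - 1) / 2) *
          ∏ i ∈ Finset.univ.filter (fun i : Fin m => i < j), (w j - w i) ^ (t i * t j)) := by
        refine Finset.prod_congr rfl fun j _ => ?_
        rw [Fin.prod_univ_eq_prod_range (fun s => ((Nat.factorial s : ℂ)) * w j ^ s *
          ∏ k ∈ Finset.univ.filter (fun k : Fin m => k < j), (w j - w k) ^ (t k)) (t j)]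
        rw [Finset.prod_mul_distrib, Finset.prod_mul_distrib, Finset.prod_const, Finset.card_range,
          Finset.prod_pow_eq_pow_sum, Finset.sum_range_id, ← Finset.prod_pow]
        congr 1
        exact Finset.prod_congr rfl fun k _ => by rw [← pow_mul]
    _ = _ := by rw [Finset.prod_mul_distrib, Finset.prod_mul_distrib]
end

section
/- Let v₁,…,v_n be nonzero complex numbers, let A be a fixed real number, and let Q ∈ ℂ[X₀,X₁,…,X_n] be a nonzero polynomial with all partial degrees at most L. If Q(A+a, v₁^{A+a}, …, v_n^{A+a}) = 0 for all integers a with 0 ≤ a < (L+1)^{n+1}, then there exists (h₁,…,h_n) ∈ ℤⁿ with 0 < max|h_i| ≤ L and v₁^{h₁}⋯v_n^{h_n} = 1. -/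
section ExpPolyHelpers
open Polynomial Finset


noncomputable def Tr (σ ρ : ℂ) (P : ℂ[X]) : ℂ[X] :=
  C σ * P.comp (X + C 1) - C ρ * P

lemma Tr_zero (σ ρ : ℂ) : Tr σ ρ 0 = 0 := by simp [Tr]

lemma natDegree_comp_X_add_one (P : ℂ[X]) : (P.comp (X + C 1)).natDegree = P.natDegree := by
  rw [Polynomial.natDegree_comp, natDegree_X_add_C, mul_one]

lemma coeff_comp_X_add_one_natDegree (P : ℂ[X]) :
    (P.comp (X + C 1)).coeff P.natDegree = P.leadingCoeff := by
  rw [← natDegree_comp_X_add_one P, coeff_natDegree,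
    leadingCoeff_comp (by rw [natDegree_X_add_C]; exact one_ne_zero),
    (monic_X_add_C (1:ℂ)).leadingCoeff, one_pow, mul_one]

lemma natDegree_Tr_le (σ ρ : ℂ) (P : ℂ[X]) : (Tr σ ρ P).natDegree ≤ P.natDegree := by
  refine (natDegree_sub_le _ _).trans (max_le ?_ ?_)
  · exact (natDegree_C_mul_le _ _).trans (natDegree_comp_X_add_one P).le
  · exact natDegree_C_mul_le _ _

lemma natDegree_iter_Tr_le (σ ρ : ℂ) (t : ℕ) (P : ℂ[X]) :
    ((Tr σ ρ)^[t] P).natDegree ≤ P.natDegree := by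
  induction t generalizing P with
  | zero => simp
  | succ t ih =>
    rw [Function.iterate_succ_apply]
    exact (ih _).trans (natDegree_Tr_le _ _ _)

lemma Tr_diag_kill (ρ : ℂ) (t : ℕ) (P : ℂ[X]) (h : P.natDegree < t) :
    (Tr ρ ρ)^[t] P = 0 := by
  induction t generalizing P with
  | zero => exact absurd h (Nat.not_lt_zero _)
  | succ t ih =>
    rw [Function.iterate_succ_apply]
    rcases eq_or_ne P.natDegree 0 with h0 | h0
    · have : Tr ρ ρ P = 0 := by
        obtain ⟨c, rfl⟩ := natDegree_eq_zero.mp h0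
        simp [Tr]
      rw [this]
      exact Function.iterate_fixed (Tr_zero _ _) t
    · apply ih
      have hcz : ∀ m : ℕ, P.natDegree ≤ m → (P.comp (X + C 1) - P).coeff m = 0 := by
        intro m hm
        rcases eq_or_lt_of_le hm with rfl | hlt
        · rw [coeff_sub, coeff_comp_X_add_one_natDegree, coeff_natDegree, sub_self]
        · rw [coeff_sub, coeff_eq_zero_of_natDegree_lt (by rw [natDegree_comp_X_add_one]; exact hlt),
            coeff_eq_zero_of_natDegree_lt hlt, sub_self]
      have hd : (Tr ρ ρ P).natDegree < P.natDegree := by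
        have hTr : Tr ρ ρ P = C ρ * (P.comp (X + C 1) - P) := by rw [Tr, mul_sub]
        rw [hTr]
        refine lt_of_le_of_lt (natDegree_C_mul_le _ _) ?_
        rcases eq_or_ne (P.comp (X + C 1) - P) 0 with hz | hz
        · rw [hz, natDegree_zero]; exact Nat.pos_of_ne_zero h0
        · rw [natDegree_lt_iff_degree_lt hz, degree_lt_iff_coeff_zero]
          intro m hm
          exact hcz m (by exact_mod_cast hm)
      omega

lemma Tr_offdiag_ne_zero {σ ρ : ℂ} (hne : σ ≠ ρ) {P : ℂ[X]} (hP : P ≠ 0) :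
    Tr σ ρ P ≠ 0 := by
  intro h
  have hc : (Tr σ ρ P).coeff P.natDegree = (σ - ρ) * P.leadingCoeff := by
    rw [Tr, coeff_sub, coeff_C_mul, coeff_C_mul, coeff_comp_X_add_one_natDegree,
      coeff_natDegree]
    ring
  rw [h, coeff_zero] at hc
  rcases mul_eq_zero.mp hc.symm with h' | h'
  · exact hne (sub_eq_zero.mp h')
  · exact hP (leadingCoeff_eq_zero.mp h')

lemma Tr_offdiag_iter_ne_zero {σ ρ : ℂ} (hne : σ ≠ ρ) (t : ℕ) {P : ℂ[X]} (hP : P ≠ 0) :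
    (Tr σ ρ)^[t] P ≠ 0 := by
  induction t generalizing P with
  | zero => simpa
  | succ t ih =>
    rw [Function.iterate_succ_apply]
    exact ih (Tr_offdiag_ne_zero hne hP)

noncomputable def Dl (ρ : ℂ) (f : ℕ → ℂ) : ℕ → ℂ := fun a => f (a + 1) - ρ * f a

lemma Dl_term (ρ σ : ℂ) (P : ℂ[X]) :
    Dl ρ (fun a : ℕ => P.eval (a : ℂ) * σ ^ a)
      = fun a : ℕ => (Tr σ ρ P).eval (a : ℂ) * σ ^ a := by
  funext a
  simp only [Dl, Tr, eval_sub, eval_mul, eval_C, eval_comp, eval_add, eval_X, eval_one]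
  push_cast
  ring

lemma Dl_iter_vanish (ρ : ℂ) (t : ℕ) :
    ∀ (N : ℕ) (f : ℕ → ℂ), (∀ b, b < N → f b = 0) → ∀ b, b + t < N → (Dl ρ)^[t] f b = 0 := by
  induction t with
  | zero => intro N f hf b hb; simpa using hf b (by omega)
  | succ t ih =>
    intro N f hf b hb
    rw [Function.iterate_succ_apply]
    rcases N with _ | N
    · omega
    refine ih N (Dl ρ f) ?_ b (by omega)
    intro c hc
    simp only [Dl, hf c (by omega), hf (c + 1) (by omega), mul_zero, sub_zero]

lemma Dl_iter_sum {ι : Type*} (s : Finset ι) (ρ0 : ℂ) (ρ : ι → ℂ) (P : ι → ℂ[X]) (t : ℕ) :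
    (Dl ρ0)^[t] (fun a : ℕ => ∑ j ∈ s, (P j).eval (a : ℂ) * ρ j ^ a)
      = fun a : ℕ => ∑ j ∈ s, (((Tr (ρ j) ρ0)^[t]) (P j)).eval (a : ℂ) * ρ j ^ a := by
  induction t with
  | zero => simp
  | succ t ih =>
    rw [Function.iterate_succ_apply', ih]
    have : Dl ρ0 (fun a : ℕ => ∑ j ∈ s, (((Tr (ρ j) ρ0)^[t]) (P j)).eval (a : ℂ) * ρ j ^ a)
        = fun a : ℕ => ∑ j ∈ s, (Dl ρ0 (fun b : ℕ => (((Tr (ρ j) ρ0)^[t]) (P j)).eval (b : ℂ) * ρ j ^ b)) a := by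
      funext a
      simp only [Dl, mul_sum]
      rw [← Finset.sum_sub_distrib]
    rw [this]
    funext a
    refine Finset.sum_congr rfl fun j _ => ?_
    rw [Dl_term, Function.iterate_succ_apply']

lemma exp_poly_key {ι : Type*} [DecidableEq ι] (D : ℕ) (S : Finset ι) :
    ∀ (ρ : ι → ℂ) (P : ι → ℂ[X]), Set.InjOn ρ S → (∀ j ∈ S, ρ j ≠ 0) →
      (∀ j ∈ S, (P j).natDegree < D) →
      (∀ a : ℕ, a < S.card * D → ∑ j ∈ S, (P j).eval (a : ℂ) * ρ j ^ a = 0) →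
      ∀ j ∈ S, P j = 0 := by
  induction S using Finset.induction_on with
  | empty => intro ρ P _ _ _ _ j hj; exact absurd hj (Finset.notMem_empty j)
  | @insert x s hx ih =>
    intro ρ P hinj hρ0 hdeg hvan
    have hD : 0 < D := Nat.pos_of_ne_zero (by rintro rfl; exact Nat.not_lt_zero _ (hdeg x (mem_insert_self x s)))
    set Qt : ι → ℂ[X] := fun j => (Tr (ρ j) (ρ x))^[D] (P j) with hQt
    have hcard : (insert x s).card = s.card + 1 := Finset.card_insert_of_notMem hx
    -- after D difference steps
    have hsum := Dl_iter_sum (insert x s) (ρ x) ρ P D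
    have hQx : Qt x = 0 := Tr_diag_kill (ρ x) D (P x) (hdeg x (mem_insert_self x s))
    have hvan2 : ∀ a : ℕ, a < s.card * D → ∑ j ∈ s, (Qt j).eval (a : ℂ) * ρ j ^ a = 0 := by
      intro a ha
      have h1 : (Dl (ρ x))^[D] (fun b : ℕ => ∑ j ∈ insert x s, (P j).eval (b : ℂ) * ρ j ^ b) a = 0 := by
        refine Dl_iter_vanish (ρ x) D ((insert x s).card * D) _ (fun b hb => hvan b hb) a ?_
        rw [hcard]; nlinarith
      rw [hsum] at h1
      have h1' : ∑ j ∈ insert x s, ((Tr (ρ j) (ρ x))^[D] (P j)).eval (a : ℂ) * ρ j ^ a = 0 := h1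
      rw [Finset.sum_insert hx] at h1'
      have hQx' : ((Tr (ρ x) (ρ x))^[D] (P x)) = 0 := hQx
      rw [hQx'] at h1'
      simpa using h1'
    have hne : ∀ j ∈ s, ρ j ≠ ρ x := by
      intro j hj heq
      exact hx ((hinj (mem_insert_of_mem hj) (mem_insert_self x s) heq) ▸ hj)
    have hQs : ∀ j ∈ s, Qt j = 0 := by
      refine ih ρ Qt (hinj.mono (by intro y hy; exact mem_insert_of_mem hy)) ?_ ?_ hvan2
      · intro j hj; exact hρ0 j (mem_insert_of_mem hj)
      · intro j hj
        exact lt_of_le_of_lt (natDegree_iter_Tr_le _ _ _ _) (hdeg j (mem_insert_of_mem hj))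
    have hPs : ∀ j ∈ s, P j = 0 := by
      intro j hj
      by_contra hP
      exact Tr_offdiag_iter_ne_zero (hne j hj) D hP (hQs j hj)
    have hPx : P x = 0 := by
      have hev : ∀ a : ℕ, a < D → (P x).eval (a : ℂ) = 0 := by
        intro a ha
        have := hvan a (by rw [hcard]; nlinarith)
        rw [Finset.sum_insert hx] at this
        rw [Finset.sum_eq_zero (fun j hj => by rw [hPs j hj]; simp)] at this
        have h2 : (P x).eval (a : ℂ) * ρ x ^ a = 0 := by rwa [add_zero] at this
        exact (mul_eq_zero.mp h2).resolve_right (pow_ne_zero a (hρ0 x (mem_insert_self x s)))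
      refine Polynomial.eq_zero_of_natDegree_lt_card_of_eval_eq_zero' (P x)
        ((Finset.range D).image (fun a : ℕ => (a : ℂ))) ?_ ?_
      · intro z hz
        obtain ⟨a, ha, rfl⟩ := Finset.mem_image.mp hz
        exact hev a (Finset.mem_range.mp ha)
      · rw [Finset.card_image_of_injective _ Nat.cast_injective, Finset.card_range]
        exact hdeg x (mem_insert_self x s)
    intro j hj
    rcases Finset.mem_insert.mp hj with rfl | hj'
    · exact hPx
    · exact hPs j hj'

end ExpPolyHelpers

open Finset MvPolynomial


/-- If `Q` is a nonzero polynomial in `n+1` variables with partial degrees `≤ L`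
which vanishes at the points `(A+a, v₁^{A+a}, …, v_n^{A+a})` for all integers
`0 ≤ a < (L+1)^{n+1}`, then `v₁,…,v_n` are multiplicatively dependent with
exponents bounded by `L`. -/
theorem mult_dependence_of_poly_vanishing (n L : ℕ) (v : Fin n → ℂ)
    (hv : ∀ i, v i ≠ 0) (Q : MvPolynomial (Fin (n + 1)) ℂ) (hQ : Q ≠ 0)
    (hdeg : ∀ i, MvPolynomial.degreeOf i Q ≤ L) (A : ℝ)
    (hvanish : ∀ a : ℕ, a < (L + 1) ^ (n + 1) →
      MvPolynomial.eval
        (Fin.cases ((A : ℂ) + (a : ℂ))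
          (fun i : Fin n => v i ^ ((A : ℂ) + (a : ℂ)))) Q = 0) :
    ∃ h : Fin n → ℤ, h ≠ 0 ∧ (∀ i, (h i).natAbs ≤ L) ∧ ∏ i : Fin n, v i ^ h i = 1 := by
  by_contra hcon
  push_neg at hcon
  -- setup
  set S : Finset (Fin n → ℕ) := Fintype.piFinset (fun _ => Finset.range (L + 1)) with hS
  set ρ : (Fin n → ℕ) → ℂ := fun k => ∏ i, v i ^ k i with hρ
  set c : (Fin n → ℕ) → ℂ := fun k => ∏ i, (v i ^ (A : ℂ)) ^ k i with hc
  set toF : (Fin n → ℕ) → (Fin n →₀ ℕ) := fun k => Finsupp.equivFunOnFinite.symm k with htoF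
  set R : (Fin n → ℕ) → Polynomial ℂ := fun k =>
    ∑ j ∈ Finset.range (L + 1),
      Polynomial.C (Q.coeff (Finsupp.cons j (toF k))) * Polynomial.X ^ j with hR
  set P : (Fin n → ℕ) → Polynomial ℂ := fun k =>
    Polynomial.C (c k) * (R k).comp (Polynomial.X + Polynomial.C (A : ℂ)) with hP
  have hck : ∀ k, c k ≠ 0 := by
    intro k
    refine Finset.prod_ne_zero_iff.mpr fun i _ => pow_ne_zero _ ?_
    simp [Complex.cpow_eq_zero_iff, hv i]
  have hρk : ∀ k, ρ k ≠ 0 := fun k =>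
    Finset.prod_ne_zero_iff.mpr fun i _ => pow_ne_zero _ (hv i)
  -- injectivity of ρ on S
  have hinj : Set.InjOn ρ S := by
    intro k hk k' hk' heq
    simp only [Finset.coe_sort_coe, Finset.mem_coe, hS, Fintype.mem_piFinset,
      Finset.mem_range] at hk hk'
    set h : Fin n → ℤ := fun i => (k i : ℤ) - k' i with hh
    have hprod : ∏ i, v i ^ h i = 1 := by
      have : ∀ i, v i ^ h i = v i ^ (k i : ℕ) * (v i ^ (k' i : ℕ))⁻¹ := by
        intro i
        rw [hh]
        rw [zpow_sub₀ (hv i), zpow_natCast, zpow_natCast]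
        rfl
      rw [Finset.prod_congr rfl fun i _ => this i, Finset.prod_mul_distrib,
        Finset.prod_inv_distrib]
      show ρ k * (ρ k')⁻¹ = 1
      rw [heq]
      exact mul_inv_cancel₀ (hρk k')
    have habs : ∀ i, (h i).natAbs ≤ L := by
      intro i
      have h1 := hk i
      have h2 := hk' i
      simp only [hh]
      omega
    have hzero : h = 0 := by
      by_contra hne
      exact hcon h hne habs hprod
    funext i
    have hi := congrFun hzero i
    simp only [hh, Pi.zero_apply, sub_eq_zero] at hi
    exact_mod_cast hi
  -- degree bound
  have hdegP : ∀ k, (P k).natDegree ≤ L := by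
    intro k
    refine (Polynomial.natDegree_C_mul_le _ _).trans ?_
    rw [Polynomial.natDegree_comp, Polynomial.natDegree_X_add_C, mul_one]
    refine Polynomial.natDegree_sum_le_of_forall_le _ _ fun j hj => ?_
    calc (Polynomial.C (Q.coeff (Finsupp.cons j (toF k))) * Polynomial.X ^ j).natDegree
        ≤ (Polynomial.X ^ j : Polynomial ℂ).natDegree := Polynomial.natDegree_C_mul_le _ _
      _ = j := Polynomial.natDegree_X_pow j
      _ ≤ L := by have := Finset.mem_range.mp hj; omega
  -- key evaluation identity
  have hkey : ∀ a : ℕ,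
      MvPolynomial.eval
        (Fin.cases ((A : ℂ) + (a : ℂ))
          (fun i : Fin n => v i ^ ((A : ℂ) + (a : ℂ)))) Q
        = ∑ k ∈ S, (P k).eval (a : ℂ) * ρ k ^ a := by
    intro a
    set z : Fin (n + 1) → ℂ := Fin.cases ((A : ℂ) + (a : ℂ))
      (fun i : Fin n => v i ^ ((A : ℂ) + (a : ℂ))) with hz
    set e : (Fin n → ℕ) × ℕ → (Fin (n + 1) →₀ ℕ) := fun p => Finsupp.cons p.2 (toF p.1) with he
    set T : Finset ((Fin n → ℕ) × ℕ) := S ×ˢ Finset.range (L + 1) with hT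
    have hsub : Q.support ⊆ T.image e := by
      intro d hd
      refine Finset.mem_image.mpr ⟨(fun i => d i.succ, d 0), ?_, ?_⟩
      · refine Finset.mem_product.mpr ⟨?_, ?_⟩
        · exact Fintype.mem_piFinset.mpr fun i => Finset.mem_range.mpr
            (lt_of_le_of_lt (le_trans (MvPolynomial.monomial_le_degreeOf i.succ hd)
              (hdeg i.succ)) (Nat.lt_succ_self L))
        · exact Finset.mem_range.mpr
            (lt_of_le_of_lt (le_trans (MvPolynomial.monomial_le_degreeOf 0 hd)
              (hdeg 0)) (Nat.lt_succ_self L))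
      · ext i
        refine Fin.cases ?_ (fun i => ?_) i
        · simp [he, Finsupp.cons_zero]
        · simp [he, Finsupp.cons_succ, htoF]
    have heinj : ∀ p ∈ T, ∀ q ∈ T, e p = e q → p = q := by
      intro p _ q _ hpq
      have h0 := DFunLike.congr_fun hpq 0
      have hs : ∀ i : Fin n, p.1 i = q.1 i := by
        intro i
        have := DFunLike.congr_fun hpq i.succ
        simpa [he, Finsupp.cons_succ, htoF] using this
      simp only [he, Finsupp.cons_zero] at h0
      exact Prod.ext (funext hs) h0
    have e2 : MvPolynomial.eval z Q
        = ∑ p ∈ T, Q.coeff (e p) * ∏ i, z i ^ (e p) i := by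
      rw [MvPolynomial.eval_eq' z Q,
        Finset.sum_subset hsub (fun d _ hd => by
          rw [MvPolynomial.notMem_support_iff.mp hd, zero_mul]),
        Finset.sum_image heinj]
    rw [e2, hT, Finset.sum_product]
    refine Finset.sum_congr rfl fun k hk => ?_
    -- per k identity
    have hterm : ∀ j, ∏ i, z i ^ (e (k, j)) i
        = ((A : ℂ) + a) ^ j * (c k * ρ k ^ a) := by
      intro j
      rw [Fin.prod_univ_succ]
      have hz0 : z 0 = (A : ℂ) + a := by simp [hz]
      have hzs : ∀ i : Fin n, z i.succ = v i ^ (A : ℂ) * v i ^ a := by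
        intro i
        simp only [hz, Fin.cases_succ]
        rw [Complex.cpow_add _ _ (hv i), Complex.cpow_natCast]
      have h0 : (e (k, j)) 0 = j := Finsupp.cons_zero _ _
      have hsucc : ∀ i : Fin n, (e (k, j)) i.succ = k i := by
        intro i
        simp [he, Finsupp.cons_succ, htoF]
      rw [hz0, h0]
      congr 1
      calc ∏ i : Fin n, z i.succ ^ (e (k, j)) i.succ
          = ∏ i : Fin n, ((v i ^ (A : ℂ)) ^ k i * (v i ^ k i) ^ a) := by
            refine Finset.prod_congr rfl fun i _ => ?_
            rw [hzs i, hsucc i, mul_pow, ← pow_mul, ← pow_mul, Nat.mul_comm a (k i)]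
        _ = c k * ρ k ^ a := by
            rw [Finset.prod_mul_distrib, ← Finset.prod_pow]
    have hPeval : (P k).eval (a : ℂ)
        = c k * ∑ j ∈ Finset.range (L + 1),
            Q.coeff (Finsupp.cons j (toF k)) * ((a : ℂ) + A) ^ j := by
      rw [hP]
      rw [Polynomial.eval_mul, Polynomial.eval_C, Polynomial.eval_comp,
        Polynomial.eval_add, Polynomial.eval_X, Polynomial.eval_C]
      congr 1
      rw [hR]
      simp only
      rw [Polynomial.eval_finset_sum]
      refine Finset.sum_congr rfl fun j _ => ?_
      rw [Polynomial.eval_mul, Polynomial.eval_C, Polynomial.eval_pow, Polynomial.eval_X]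
    have hsplit : (P k).eval (a : ℂ) * ρ k ^ a
        = ∑ j ∈ Finset.range (L + 1),
            c k * (Q.coeff (Finsupp.cons j (toF k)) * ((a : ℂ) + A) ^ j) * ρ k ^ a := by
      rw [hPeval, Finset.mul_sum, Finset.sum_mul]
    rw [hsplit, Finset.sum_congr rfl fun j _ => by rw [hterm j]]
    refine Finset.sum_congr rfl fun j _ => ?_
    rw [add_comm (a : ℂ) (A : ℂ)]
    ring
  -- vanishing hypothesis for key lemma
  have hcardS : S.card = (L + 1) ^ n := by
    rw [hS, Fintype.card_piFinset]
    simp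
  have hvan : ∀ a : ℕ, a < S.card * (L + 1) → ∑ k ∈ S, (P k).eval (a : ℂ) * ρ k ^ a = 0 := by
    intro a ha
    rw [← hkey a]
    exact hvanish a (by rw [pow_succ, ← hcardS]; exact ha)
  have hall := exp_poly_key (L + 1) S ρ P hinj (fun k _ => hρk k)
    (fun k _ => lt_of_le_of_lt (hdegP k) (Nat.lt_succ_self L)) hvan
  -- produce a nonzero P k
  obtain ⟨d, hd⟩ : Q.support.Nonempty := by
    rw [Finset.nonempty_iff_ne_empty]
    intro h
    exact hQ (MvPolynomial.support_eq_empty.mp h)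
  set k : Fin n → ℕ := fun i => d i.succ with hk
  have hkS : k ∈ S := Fintype.mem_piFinset.mpr fun i => Finset.mem_range.mpr
    (lt_of_le_of_lt (le_trans (MvPolynomial.monomial_le_degreeOf i.succ hd) (hdeg i.succ))
      (Nat.lt_succ_self L))
  have hd0 : d 0 < L + 1 :=
    lt_of_le_of_lt (le_trans (MvPolynomial.monomial_le_degreeOf 0 hd) (hdeg 0))
      (Nat.lt_succ_self L)
  have hcons : Finsupp.cons (d 0) (toF k) = d := by
    ext i
    refine Fin.cases ?_ (fun i => ?_) i
    · simp [Finsupp.cons_zero]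
    · simp [Finsupp.cons_succ, htoF, hk]
  have hRcoeff : (R k).coeff (d 0) = Q.coeff d := by
    rw [hR]
    simp only
    rw [Polynomial.finset_sum_coeff, Finset.sum_eq_single (d 0)]
    · simp [Polynomial.coeff_C_mul, Polynomial.coeff_X_pow, hcons]
    · intro j hj hne
      simp [Polynomial.coeff_C_mul, Polynomial.coeff_X_pow, Ne.symm hne]
    · intro hmem
      exact absurd (Finset.mem_range.mpr hd0) hmem
  have hRk : R k ≠ 0 := by
    intro h
    apply MvPolynomial.mem_support_iff.mp hd
    rw [← hRcoeff, h, Polynomial.coeff_zero]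
  have hcomp : (R k).comp (Polynomial.X + Polynomial.C (A : ℂ)) ≠ 0 := by
    intro h
    apply hRk
    have h2 : ((R k).comp (Polynomial.X + Polynomial.C (A : ℂ))).comp
        (Polynomial.X - Polynomial.C (A : ℂ)) = 0 := by rw [h, Polynomial.zero_comp]
    rw [Polynomial.comp_assoc] at h2
    have h3 : (Polynomial.X + Polynomial.C (A : ℂ)).comp
        (Polynomial.X - Polynomial.C (A : ℂ)) = Polynomial.X := by
      rw [Polynomial.add_comp, Polynomial.X_comp, Polynomial.C_comp, sub_add_cancel]
    rw [h3, Polynomial.comp_X] at h2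
    exact h2
  have hPk : P k ≠ 0 := mul_ne_zero (Polynomial.C_ne_zero.mpr (hck k)) hcomp
  exact hPk (hall k hkS)
end

section
/- Let (v₁,w₁),…,(v_n,w_n) be elements of (ℂ×)². The following are equivalent: (i) there exists a nonzero polynomial P ∈ ℂ[X₁,…,X_n] with P(v₁^a w₁^b, …, v_n^a w_n^b) = 0 for all (a,b) ∈ ℤ²; (ii) there exists a nonzero polynomial Q ∈ ℂ[T₁,T₂,X₁,…,X_n] with Q(a, b, v₁^a w₁^b, …, v_n^a w_n^b) = 0 for all (a,b) ∈ ℤ²; (iii) the pairs (v₁,w₁),…,(v_n,w_n) are multiplicatively dependent in the group (ℂ×)². -/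
open Finset MvPolynomial

namespace PolyVanishAux



noncomputable def Dop (l m : ℂ) (p : Polynomial ℂ) : Polynomial ℂ :=
  Polynomial.C m * p.comp (Polynomial.X + Polynomial.C 1) - Polynomial.C l * p

lemma Dop_eval (l : ℂ) {m : ℂ} (hm : m ≠ 0) (p : Polynomial ℂ) (a : ℤ) :
    (Dop l m p).eval (a : ℂ) * m ^ a
      = p.eval (((a + 1 : ℤ) : ℂ)) * m ^ (a + 1) - l * (p.eval (a : ℂ) * m ^ a) := by
  rw [zpow_add_one₀ hm]
  simp only [Dop, Polynomial.eval_sub, Polynomial.eval_mul, Polynomial.eval_C,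
    Polynomial.eval_comp, Polynomial.eval_add, Polynomial.eval_X]
  push_cast
  ring

lemma natDegree_X_add_one : (Polynomial.X + Polynomial.C 1 : Polynomial ℂ).natDegree = 1 :=
  Polynomial.natDegree_X_add_C 1

lemma natDegree_comp_add_one (p : Polynomial ℂ) :
    (p.comp (Polynomial.X + Polynomial.C 1)).natDegree = p.natDegree := by
  rw [Polynomial.natDegree_comp, natDegree_X_add_one, mul_one]

lemma leadingCoeff_comp_add_one (p : Polynomial ℂ) :
    (p.comp (Polynomial.X + Polynomial.C 1)).leadingCoeff = p.leadingCoeff := by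
  rw [Polynomial.leadingCoeff_comp (by rw [natDegree_X_add_one]; exact one_ne_zero),
    (Polynomial.monic_X_add_C (1:ℂ)).leadingCoeff, one_pow, mul_one]

lemma Dop_self_natDegree_lt (l : ℂ) (p : Polynomial ℂ) (h : Dop l l p ≠ 0) :
    (Dop l l p).natDegree < p.natDegree := by
  have hD : Dop l l p = Polynomial.C l * (p.comp (Polynomial.X + Polynomial.C 1) - p) := by
    rw [Dop]; ring
  have hp : p ≠ 0 := by rintro rfl; simp [Dop] at h
  have hsub : p.comp (Polynomial.X + Polynomial.C 1) - p ≠ 0 := by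
    rintro hs; rw [hD, hs, mul_zero] at h; exact h rfl
  have hcomp : p.comp (Polynomial.X + Polynomial.C 1) ≠ 0 := by
    rw [← Polynomial.leadingCoeff_ne_zero, leadingCoeff_comp_add_one]
    exact Polynomial.leadingCoeff_ne_zero.mpr hp
  have hdeg : (p.comp (Polynomial.X + Polynomial.C 1)).degree = p.degree := by
    rw [Polynomial.degree_eq_natDegree hcomp, Polynomial.degree_eq_natDegree hp,
      natDegree_comp_add_one]
  have hlt : (p.comp (Polynomial.X + Polynomial.C 1) - p).degree
      < (p.comp (Polynomial.X + Polynomial.C 1)).degree :=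
    Polynomial.degree_sub_lt hdeg hcomp (leadingCoeff_comp_add_one p)
  have hlt' : (p.comp (Polynomial.X + Polynomial.C 1) - p).natDegree < p.natDegree := by
    rw [← natDegree_comp_add_one p]
    exact Polynomial.natDegree_lt_natDegree hsub hlt
  calc (Dop l l p).natDegree ≤ (p.comp (Polynomial.X + Polynomial.C 1) - p).natDegree := by
        rw [hD]; exact Polynomial.natDegree_C_mul_le _ _
    _ < p.natDegree := hlt'

lemma Dop_self_iterate (l : ℂ) : ∀ (N : ℕ) (p : Polynomial ℂ), p.natDegree ≤ N →
    (Dop l l)^[N + 1] p = 0 := by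
  intro N
  induction N with
  | zero =>
    intro p hp
    have : Dop l l p = 0 := by
      by_contra h
      exact absurd (Dop_self_natDegree_lt l p h) (by omega)
    simpa using this
  | succ N ih =>
    intro p hp
    rw [Function.iterate_succ_apply]
    rcases eq_or_ne (Dop l l p) 0 with h0 | h0
    · rw [h0]
      have : Dop l l (0 : Polynomial ℂ) = 0 := by simp [Dop]
      exact Function.iterate_fixed this _
    · exact ih _ (by have := Dop_self_natDegree_lt l p h0; omega)

lemma Dop_ne_zero {l m : ℂ} (h : m ≠ l) {p : Polynomial ℂ} (hp : p ≠ 0) : Dop l m p ≠ 0 := by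
  intro h0
  have hc : (Dop l m p).coeff p.natDegree = (m - l) * p.leadingCoeff := by
    have h1 : (p.comp (Polynomial.X + Polynomial.C 1)).coeff p.natDegree = p.leadingCoeff := by
      conv_lhs => rw [← natDegree_comp_add_one p]
      rw [Polynomial.coeff_natDegree, leadingCoeff_comp_add_one]
    rw [Dop, Polynomial.coeff_sub, Polynomial.coeff_C_mul, Polynomial.coeff_C_mul, h1,
      Polynomial.coeff_natDegree]
    ring
  rw [h0] at hc
  simp only [Polynomial.coeff_zero] at hc
  have := mul_ne_zero (sub_ne_zero.mpr h) (Polynomial.leadingCoeff_ne_zero.mpr hp)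
  exact this hc.symm

lemma Dop_iterate_ne_zero {l m : ℂ} (h : m ≠ l) {p : Polynomial ℂ} (hp : p ≠ 0) (k : ℕ) :
    (Dop l m)^[k] p ≠ 0 := by
  induction k with
  | zero => simpa using hp
  | succ k ih => rw [Function.iterate_succ_apply']; exact Dop_ne_zero h ih

lemma poly_zero_of_int_roots (p : Polynomial ℂ) (h : ∀ a : ℤ, p.eval (a : ℂ) = 0) : p = 0 := by
  apply Polynomial.eq_zero_of_infinite_isRoot
  apply Set.Infinite.mono (s := Set.range ((↑) : ℤ → ℂ))
  · rintro _ ⟨a, rfl⟩; exact h a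
  · exact Set.infinite_range_of_injective Int.cast_injective

lemma lemA : ∀ (S : Finset ℂ), (∀ l ∈ S, l ≠ 0) → ∀ (P : ℂ → Polynomial ℂ),
    (∀ a : ℤ, ∑ l ∈ S, (P l).eval (a : ℂ) * l ^ a = 0) → ∀ l ∈ S, P l = 0 := by
  intro S
  induction S using Finset.strongInduction with
  | _ S ih =>
    intro hS P h
    rcases S.eq_empty_or_nonempty with rfl | ⟨l₀, hl₀⟩
    · simp
    · -- iterate the difference operator
      have step : ∀ (k : ℕ) (a : ℤ),
          ∑ l ∈ S, ((Dop l₀ l)^[k] (P l)).eval (a : ℂ) * l ^ a = 0 := by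
        intro k
        induction k with
        | zero => simpa using h
        | succ k ihk =>
          intro a
          have e1 : ∀ l ∈ S, ((Dop l₀ l)^[k+1] (P l)).eval (a : ℂ) * l ^ a
              = ((Dop l₀ l)^[k] (P l)).eval (((a + 1 : ℤ) : ℂ)) * l ^ (a + 1)
                - l₀ * (((Dop l₀ l)^[k] (P l)).eval (a : ℂ) * l ^ a) := by
            intro l hl
            rw [Function.iterate_succ_apply']
            exact Dop_eval l₀ (hS l hl) _ a
          rw [Finset.sum_congr rfl e1, Finset.sum_sub_distrib, ← Finset.mul_sum,
            ihk (a + 1), ihk a]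
          ring
      set k := (P l₀).natDegree + 1 with hk
      have hPl₀k : (Dop l₀ l₀)^[k] (P l₀) = 0 := Dop_self_iterate l₀ _ _ le_rfl
      have h' : ∀ a : ℤ, ∑ l ∈ S.erase l₀, ((Dop l₀ l)^[k] (P l)).eval (a : ℂ) * l ^ a = 0 := by
        intro a
        have := step k a
        rw [← Finset.add_sum_erase S _ hl₀, hPl₀k] at this
        simpa using this
      have key := ih (S.erase l₀) (Finset.erase_ssubset hl₀)
        (fun l hl => hS l (Finset.mem_of_mem_erase hl))
        (fun l => (Dop l₀ l)^[k] (P l)) h'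
      have hPerase : ∀ l ∈ S.erase l₀, P l = 0 := by
        intro l hl
        by_contra hPl
        exact Dop_iterate_ne_zero (Finset.ne_of_mem_erase hl) hPl k (key l hl)
      have hPl₀ : P l₀ = 0 := by
        apply poly_zero_of_int_roots
        intro a
        have := h a
        rw [← Finset.add_sum_erase S _ hl₀, Finset.sum_eq_zero (fun l hl => by
          rw [hPerase l hl]; simp)] at this
        rw [add_zero] at this
        have h2 : (P l₀).eval (a : ℂ) * l₀ ^ a = 0 := this
        exact (mul_eq_zero.mp h2).resolve_right (zpow_ne_zero a (hS l₀ hl₀))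
      intro l hl
      rcases eq_or_ne l l₀ with rfl | hne
      · exact hPl₀
      · exact hPerase l (Finset.mem_erase.mpr ⟨hne, hl⟩)





/-- evaluate a two-variable polynomial (outer variable = second argument). -/
noncomputable def E (p : Polynomial (Polynomial ℂ)) (a b : ℂ) : ℂ :=
  (p.eval (Polynomial.C b)).eval a

lemma E_swap (p : Polynomial (Polynomial ℂ)) (a b : ℂ) :
    E p a b = (p.map (Polynomial.evalRingHom a)).eval b := by
  induction p using Polynomial.induction_on' with
  | add p q hp hq => simp [E, hp.symm, hq.symm, hp, hq]
  | monomial k q =>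
    simp [E, Polynomial.eval_monomial, Polynomial.map_monomial]

lemma lemB (S : Finset (ℂ × ℂ)) (hS : ∀ p ∈ S, p.1 ≠ 0 ∧ p.2 ≠ 0)
    (P : ℂ × ℂ → Polynomial (Polynomial ℂ))
    (h : ∀ a b : ℤ, ∑ p ∈ S, E (P p) (a : ℂ) (b : ℂ) * p.1 ^ a * p.2 ^ b = 0) :
    ∀ p ∈ S, P p = 0 := by
  classical
  -- Step 1: group by first coordinate
  have step1 : ∀ (l : ℂ), l ∈ S.image Prod.fst → ∀ (a b : ℤ),
      ∑ p ∈ S.filter (fun p => p.1 = l), E (P p) (a : ℂ) (b : ℂ) * p.2 ^ b = 0 := by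
    intro l hl a b
    have key := lemA (S.image Prod.fst)
      (by rintro x hx; obtain ⟨p, hp, rfl⟩ := Finset.mem_image.mp hx; exact (hS p hp).1)
      (fun l => ∑ p ∈ S.filter (fun p => p.1 = l),
        (P p).eval (Polynomial.C (b : ℂ)) * Polynomial.C (p.2 ^ b))
      (by
        intro a'
        rw [← h a' b]
        rw [← Finset.sum_fiberwise_of_maps_to (g := Prod.fst) (t := S.image Prod.fst)
          (fun p hp => Finset.mem_image_of_mem _ hp)
          (fun p => E (P p) (a' : ℂ) (b : ℂ) * p.1 ^ a' * p.2 ^ b)]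
        apply Finset.sum_congr rfl
        intro l' hl'
        rw [Polynomial.eval_finset_sum, Finset.sum_mul]
        apply Finset.sum_congr rfl
        intro p hp
        obtain ⟨hpS, hp1⟩ := Finset.mem_filter.mp hp
        rw [Polynomial.eval_mul, Polynomial.eval_C, hp1]
        unfold E
        ring)
      l hl
    have := congrArg (Polynomial.eval (a : ℂ)) key
    rw [Polynomial.eval_finset_sum, Polynomial.eval_zero] at this
    rw [← this]
    apply Finset.sum_congr rfl
    intro p hp
    rw [Polynomial.eval_mul, Polynomial.eval_C]
    rfl
  -- Step 2: within a fiber, group by second coordinate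
  have step2 : ∀ p ∈ S, ∀ a b : ℤ, E (P p) (a : ℂ) (b : ℂ) = 0 := by
    intro p hpS a b
    have hl : p.1 ∈ S.image Prod.fst := Finset.mem_image_of_mem _ hpS
    have key := lemA ((S.filter (fun q => q.1 = p.1)).image Prod.snd)
      (by rintro x hx
          obtain ⟨q, hq, rfl⟩ := Finset.mem_image.mp hx
          exact (hS q (Finset.mem_filter.mp hq).1).2)
      (fun m => (P (p.1, m)).map (Polynomial.evalRingHom (a : ℂ)))
      (by
        intro b'
        rw [Finset.sum_image (by
          intro q hq r hr hqr
          have h1 : q.1 = p.1 := (Finset.mem_filter.mp hq).2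
          have h2 : r.1 = p.1 := (Finset.mem_filter.mp hr).2
          exact Prod.ext (h1.trans h2.symm) hqr)]
        rw [← step1 p.1 hl a b']
        apply Finset.sum_congr rfl
        intro q hq
        have h1 : q.1 = p.1 := (Finset.mem_filter.mp hq).2
        rw [← E_swap]
        congr 2
        rw [← h1])
      p.2 (Finset.mem_image_of_mem _ (Finset.mem_filter.mpr ⟨hpS, rfl⟩))
    have := congrArg (Polynomial.eval (b : ℂ)) key
    rw [Polynomial.eval_zero, ← E_swap] at this
    simpa using this
  -- conclude P p = 0
  intro p hpS
  have hmap : ∀ a : ℤ, (P p).map (Polynomial.evalRingHom (a : ℂ)) = 0 := by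
    intro a
    apply poly_zero_of_int_roots
    intro b
    rw [← E_swap]
    exact step2 p hpS a b
  apply Polynomial.ext
  intro k
  rw [Polynomial.coeff_zero]
  exact poly_zero_of_int_roots _ (by
    intro a
    have := congrArg (fun q => Polynomial.coeff q k) (hmap a)
    simpa [Polynomial.coeff_map] using this)




lemma pow_mix (x y : ℂ) (a b : ℤ) (N : ℕ) :
    (x ^ a * y ^ b) ^ N = (x ^ N) ^ a * (y ^ N) ^ b := by
  rw [mul_pow, ← zpow_natCast (x ^ a) N, ← zpow_natCast (y ^ b) N, ← zpow_mul, ← zpow_mul,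
    mul_comm a (N : ℤ), mul_comm b (N : ℤ), zpow_mul, zpow_mul, zpow_natCast, zpow_natCast]

open Classical in
noncomputable def keyF {n : ℕ} (v w : Fin n → ℂ) (m : Fin (n + 2) →₀ ℕ) : ℂ × ℂ :=
  (∏ i : Fin n, v i ^ m i.succ.succ, ∏ i : Fin n, w i ^ m i.succ.succ)

open Classical in
noncomputable def PF {n : ℕ} (v w : Fin n → ℂ) (Q : MvPolynomial (Fin (n + 2)) ℂ)
    (p : ℂ × ℂ) : Polynomial (Polynomial ℂ) :=
  ∑ m ∈ Q.support.filter (fun m => keyF v w m = p),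
    Polynomial.C (Polynomial.C (Q.coeff m) * Polynomial.X ^ (m 0)) * Polynomial.X ^ (m 1)

open Classical in
lemma E_PF {n : ℕ} (v w : Fin n → ℂ) (Q : MvPolynomial (Fin (n + 2)) ℂ) (p : ℂ × ℂ)
    (a b : ℂ) : E (PF v w Q p) a b
      = ∑ m ∈ Q.support.filter (fun m => keyF v w m = p),
          Q.coeff m * a ^ (m 0) * b ^ (m 1) := by
  unfold E PF
  rw [Polynomial.eval_finset_sum, Polynomial.eval_finset_sum]
  apply Finset.sum_congr rfl
  intro m _
  simp [mul_assoc, mul_comm, mul_left_comm]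

lemma main2 {n : ℕ} (v w : Fin n → ℂ) (hv : ∀ i, v i ≠ 0) (hw : ∀ i, w i ≠ 0)
    (hind : ∀ h : Fin n → ℤ, ∏ i : Fin n, v i ^ h i = 1 → ∏ i : Fin n, w i ^ h i = 1 → h = 0)
    (Q : MvPolynomial (Fin (n + 2)) ℂ)
    (hQ : ∀ a b : ℤ, MvPolynomial.eval
        (Fin.cases ((a : ℂ)) (Fin.cases ((b : ℂ))
          (fun i : Fin n => v i ^ a * w i ^ b))) Q = 0) :
    Q = 0 := by
  classical
  -- tails are injective
  have tails : ∀ m m' : Fin (n + 2) →₀ ℕ, keyF v w m = keyF v w m' →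
      ∀ i : Fin n, m i.succ.succ = m' i.succ.succ := by
    intro m m' hk i
    set h : Fin n → ℤ := fun i => (m i.succ.succ : ℤ) - (m' i.succ.succ : ℤ) with hh
    have hprod : ∀ (u : Fin n → ℂ), (∀ i, u i ≠ 0) →
        (∏ i : Fin n, u i ^ m i.succ.succ) = (∏ i : Fin n, u i ^ m' i.succ.succ) →
        ∏ i : Fin n, u i ^ h i = 1 := by
      intro u hu he
      have : ∏ i : Fin n, u i ^ h i
          = (∏ i : Fin n, u i ^ m i.succ.succ) / (∏ i : Fin n, u i ^ m' i.succ.succ) := by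
        rw [← Finset.prod_div_distrib]
        apply Finset.prod_congr rfl
        intro j _
        rw [hh]
        rw [zpow_sub₀ (hu j), zpow_natCast, zpow_natCast]
      rw [this, he, div_self]
      exact Finset.prod_ne_zero_iff.mpr (fun j _ => pow_ne_zero _ (hu j))
    have h1 := hprod v hv (congrArg Prod.fst hk)
    have h2 := hprod w hw (congrArg Prod.snd hk)
    have h0 := hind h h1 h2
    have := congrFun h0 i
    simp only [hh, Pi.zero_apply, sub_eq_zero] at this
    exact_mod_cast this
  -- evaluation formula
  have evalQ : ∀ a b : ℤ, (MvPolynomial.eval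
      (Fin.cases ((a : ℂ)) (Fin.cases ((b : ℂ))
        (fun i : Fin n => v i ^ a * w i ^ b)))) Q
      = ∑ m ∈ Q.support, Q.coeff m * (a : ℂ) ^ (m 0) * (b : ℂ) ^ (m 1)
          * ((keyF v w m).1 ^ a * (keyF v w m).2 ^ b) := by
    intro a b
    rw [MvPolynomial.eval_eq']
    apply Finset.sum_congr rfl
    intro m _
    have hpt : ∏ j : Fin (n + 2), (Fin.cases ((a : ℂ)) (Fin.cases ((b : ℂ))
        (fun i : Fin n => v i ^ a * w i ^ b)) : Fin (n+2) → ℂ) j ^ m j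
        = (a : ℂ) ^ (m 0) * ((b : ℂ) ^ (m 1)
          * ∏ i : Fin n, (v i ^ a * w i ^ b) ^ m i.succ.succ) := by
      rw [Fin.prod_univ_succ, Fin.prod_univ_succ]
      simp only [Fin.cases_succ, Fin.cases_zero]
      simp only [Fin.succ_zero_eq_one]
    rw [hpt]
    have hsplit : ∏ i : Fin n, (v i ^ a * w i ^ b) ^ m i.succ.succ
        = (keyF v w m).1 ^ a * (keyF v w m).2 ^ b := by
      unfold keyF
      simp only
      rw [← Finset.prod_zpow, ← Finset.prod_zpow, ← Finset.prod_mul_distrib]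
      apply Finset.prod_congr rfl
      intro i _
      exact pow_mix _ _ a b _
    rw [hsplit]
    ring
  -- apply lemB
  set S : Finset (ℂ × ℂ) := Q.support.image (keyF v w) with hSdef
  have hS : ∀ p ∈ S, p.1 ≠ 0 ∧ p.2 ≠ 0 := by
    rintro p hp
    obtain ⟨m, _, rfl⟩ := Finset.mem_image.mp hp
    constructor
    · show (∏ i : Fin n, v i ^ m i.succ.succ) ≠ 0
      exact Finset.prod_ne_zero_iff.mpr (fun j _ => pow_ne_zero _ (hv j))
    · show (∏ i : Fin n, w i ^ m i.succ.succ) ≠ 0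
      exact Finset.prod_ne_zero_iff.mpr (fun j _ => pow_ne_zero _ (hw j))
  have hsum : ∀ a b : ℤ, ∑ p ∈ S, E (PF v w Q p) (a : ℂ) (b : ℂ) * p.1 ^ a * p.2 ^ b = 0 := by
    intro a b
    rw [← hQ a b, evalQ a b]
    rw [← Finset.sum_fiberwise_of_maps_to (g := keyF v w) (t := S)
      (fun m hm => Finset.mem_image_of_mem _ hm)
      (fun m => Q.coeff m * (a : ℂ) ^ (m 0) * (b : ℂ) ^ (m 1)
          * ((keyF v w m).1 ^ a * (keyF v w m).2 ^ b))]
    apply Finset.sum_congr rfl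
    intro p hp
    rw [E_PF, Finset.sum_mul, Finset.sum_mul]
    apply Finset.sum_congr rfl
    intro m hm
    rw [(Finset.mem_filter.mp hm).2]
    ring
  have hP0 := lemB S hS (PF v w Q) hsum
  -- conclude Q = 0
  by_contra hQ0
  obtain ⟨m, hm⟩ := (MvPolynomial.support_nonempty.mpr hQ0)
  have hkey : keyF v w m ∈ S := Finset.mem_image_of_mem _ hm
  have hzero := hP0 _ hkey
  have hcoeff : ((PF v w Q (keyF v w m)).coeff (m 1)).coeff (m 0) = Q.coeff m := by
    unfold PF
    rw [Polynomial.finset_sum_coeff]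
    rw [Polynomial.finset_sum_coeff]
    have hdiag : ∀ m' ∈ Q.support.filter (fun m' => keyF v w m' = keyF v w m), m' ≠ m →
        ((Polynomial.C (Polynomial.C (Q.coeff m') * Polynomial.X ^ (m' 0))
          * Polynomial.X ^ (m' 1)).coeff (m 1)).coeff (m 0) = 0 := by
      intro m' hm' hne
      by_cases h1 : m 1 = m' 1
      · by_cases h0 : m 0 = m' 0
        · exfalso
          apply hne
          ext j
          refine Fin.cases ?_ (fun j' => ?_) j
          · exact h0.symm
          · refine Fin.cases ?_ (fun i => ?_) j'
            · rw [Fin.succ_zero_eq_one]; exact h1.symm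
            · exact tails m' m (Finset.mem_filter.mp hm').2 i
        · rw [Polynomial.coeff_C_mul, Polynomial.coeff_X_pow, if_pos h1, mul_one,
            Polynomial.coeff_C_mul, Polynomial.coeff_X_pow, if_neg h0, mul_zero]
      · rw [Polynomial.coeff_C_mul, Polynomial.coeff_X_pow, if_neg h1, mul_zero,
          Polynomial.coeff_zero]
    exact (Finset.sum_eq_single_of_mem
      (s := Q.support.filter (fun m' => keyF v w m' = keyF v w m))
      (f := fun m' => ((Polynomial.C (Polynomial.C (Q.coeff m') * Polynomial.X ^ (m' 0))
        * Polynomial.X ^ (m' 1)).coeff (m 1)).coeff (m 0))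
      m (Finset.mem_filter.mpr ⟨hm, rfl⟩) hdiag).trans
      (by rw [Polynomial.coeff_C_mul, Polynomial.coeff_X_pow, if_pos rfl, mul_one,
        Polynomial.coeff_C_mul, Polynomial.coeff_X_pow, if_pos rfl, mul_one])
  rw [hzero] at hcoeff
  simp only [Polynomial.coeff_zero] at hcoeff
  exact (MvPolynomial.mem_support_iff.mp hm) hcoeff.symm



-- (iii) ⇒ (i)
lemma dir31 {n : ℕ} (v w : Fin n → ℂ) (hv : ∀ i, v i ≠ 0) (hw : ∀ i, w i ≠ 0)
    (h : Fin n → ℤ) (hh : h ≠ 0) (h1 : ∏ i : Fin n, v i ^ h i = 1)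
    (h2 : ∏ i : Fin n, w i ^ h i = 1) :
    ∃ P : MvPolynomial (Fin n) ℂ, P ≠ 0 ∧ ∀ a b : ℤ,
      MvPolynomial.eval (fun i : Fin n => v i ^ a * w i ^ b) P = 0 := by
  classical
  set hp : Fin n →₀ ℕ := Finsupp.equivFunOnFinite.symm (fun i => (h i).toNat) with hhp
  set hm : Fin n →₀ ℕ := Finsupp.equivFunOnFinite.symm (fun i => (-h i).toNat) with hhm
  have hpm : hp ≠ hm := by
    intro he
    apply hh
    funext i
    have : (h i).toNat = (-h i).toNat := by
      have := congrArg (fun f => f i) he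
      simpa [hhp, hhm] using this
    have := Int.toNat_sub_toNat_neg (h i)
    rw [← this]
    simp [‹(h i).toNat = (-h i).toNat›]
  refine ⟨MvPolynomial.monomial hp (1 : ℂ) - MvPolynomial.monomial hm 1, ?_, ?_⟩
  · intro h0
    have := congrArg (MvPolynomial.coeff hp) h0
    rw [MvPolynomial.coeff_sub, MvPolynomial.coeff_monomial, MvPolynomial.coeff_monomial,
      if_pos rfl, if_neg (fun he => hpm he.symm)] at this
    simpa using this
  · intro a b
    rw [map_sub, MvPolynomial.eval_monomial, MvPolynomial.eval_monomial]
    rw [one_mul, one_mul, sub_eq_zero,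
      Finsupp.prod_fintype _ _ (fun i => pow_zero _),
      Finsupp.prod_fintype _ _ (fun i => pow_zero _)]
    have key : ∀ i : Fin n, (v i ^ a * w i ^ b) ^ hp i
        = (v i ^ a * w i ^ b) ^ hm i * (v i ^ a * w i ^ b) ^ h i := by
      intro i
      have hg : v i ^ a * w i ^ b ≠ 0 :=
        mul_ne_zero (zpow_ne_zero _ (hv i)) (zpow_ne_zero _ (hw i))
      rw [← zpow_natCast (v i ^ a * w i ^ b) (hp i), ← zpow_natCast (v i ^ a * w i ^ b) (hm i),
        ← zpow_add₀ hg]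
      congr 1
      have h1 : (hp i : ℤ) = ((h i).toNat : ℤ) := by simp [hhp]
      have h2 : (hm i : ℤ) = (((-h i).toNat : ℕ) : ℤ) := by simp [hhm]
      rw [h1, h2]
      omega
    have hgprod : ∏ i : Fin n, (v i ^ a * w i ^ b) ^ h i = 1 := by
      have : ∀ i : Fin n, (v i ^ a * w i ^ b) ^ h i
          = (v i ^ h i) ^ a * (w i ^ h i) ^ b := by
        intro i
        rw [mul_zpow, ← zpow_mul, ← zpow_mul, mul_comm a (h i), mul_comm b (h i),
          zpow_mul, zpow_mul]
      rw [Finset.prod_congr rfl (fun i _ => this i), Finset.prod_mul_distrib,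
        Finset.prod_zpow, Finset.prod_zpow, h1, h2]
      simp
    rw [Finset.prod_congr rfl (fun i _ => key i), Finset.prod_mul_distrib, hgprod, mul_one]

-- (i) ⇒ (ii)
lemma transfer {n : ℕ} (v w : Fin n → ℂ)
    (hP : ∃ P : MvPolynomial (Fin n) ℂ, P ≠ 0 ∧ ∀ a b : ℤ,
      MvPolynomial.eval (fun i : Fin n => v i ^ a * w i ^ b) P = 0) :
    ∃ Q : MvPolynomial (Fin (n + 2)) ℂ, Q ≠ 0 ∧ ∀ a b : ℤ,
      MvPolynomial.eval
        (Fin.cases ((a : ℂ)) (Fin.cases ((b : ℂ))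
          (fun i : Fin n => v i ^ a * w i ^ b))) Q = 0 := by
  obtain ⟨P, hP0, hPe⟩ := hP
  refine ⟨MvPolynomial.rename (fun i : Fin n => i.succ.succ) P, ?_, ?_⟩
  · intro h0
    exact hP0 (MvPolynomial.rename_injective _
      (fun i j hij => by
        have := congrArg (fun k : Fin (n+2) => k) hij
        exact Fin.succ_injective _ (Fin.succ_injective _ hij)) (by simpa using h0))
  · intro a b
    rw [MvPolynomial.eval_rename]
    have : (Fin.cases ((a : ℂ)) (Fin.cases ((b : ℂ))
        (fun i : Fin n => v i ^ a * w i ^ b)) : Fin (n+2) → ℂ)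
        ∘ (fun i : Fin n => i.succ.succ) = fun i : Fin n => v i ^ a * w i ^ b := by
      funext i
      simp
    rw [this]
    exact hPe a b

end PolyVanishAux

/-- For pairs `(vᵢ, wᵢ)` of nonzero complex numbers, the following are equivalent:
(i) some nonzero polynomial `P` satisfies `P(v₁^a w₁^b, …, v_n^a w_n^b) = 0` for all
`(a,b) ∈ ℤ²`; (ii) some nonzero polynomial `Q` satisfies
`Q(a, b, v₁^a w₁^b, …, v_n^a w_n^b) = 0` for all `(a,b) ∈ ℤ²`;
(iii) the pairs `(vᵢ, wᵢ)` are multiplicatively dependent in `(ℂ*)²`. -/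
theorem poly_vanishing_iff_mult_dependence_pairs (n : ℕ)
    (v w : Fin n → ℂ) (hv : ∀ i, v i ≠ 0) (hw : ∀ i, w i ≠ 0) :
    ((∃ P : MvPolynomial (Fin n) ℂ, P ≠ 0 ∧ ∀ a b : ℤ,
        MvPolynomial.eval (fun i : Fin n => v i ^ a * w i ^ b) P = 0) ↔
      (∃ h : Fin n → ℤ, h ≠ 0 ∧ ∏ i : Fin n, v i ^ h i = 1 ∧
        ∏ i : Fin n, w i ^ h i = 1)) ∧
    ((∃ Q : MvPolynomial (Fin (n + 2)) ℂ, Q ≠ 0 ∧ ∀ a b : ℤ,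
        MvPolynomial.eval
          (Fin.cases ((a : ℂ)) (Fin.cases ((b : ℂ))
            (fun i : Fin n => v i ^ a * w i ^ b))) Q = 0) ↔
      (∃ h : Fin n → ℤ, h ≠ 0 ∧ ∏ i : Fin n, v i ^ h i = 1 ∧
        ∏ i : Fin n, w i ^ h i = 1)) := by
  have key2 : (∃ Q : MvPolynomial (Fin (n + 2)) ℂ, Q ≠ 0 ∧ ∀ a b : ℤ,
      MvPolynomial.eval
        (Fin.cases ((a : ℂ)) (Fin.cases ((b : ℂ))
          (fun i : Fin n => v i ^ a * w i ^ b))) Q = 0) →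
      (∃ h : Fin n → ℤ, h ≠ 0 ∧ ∏ i : Fin n, v i ^ h i = 1 ∧
        ∏ i : Fin n, w i ^ h i = 1) := by
    rintro ⟨Q, hQ0, hQe⟩
    by_contra hcon
    push_neg at hcon
    apply hQ0
    apply PolyVanishAux.main2 v w hv hw ?_ Q hQe
    intro h h1 h2
    by_contra hne
    exact absurd h2 (hcon h hne h1)
  constructor
  · constructor
    · intro hP
      exact key2 (PolyVanishAux.transfer v w hP)
    · rintro ⟨h, hh, h1, h2⟩
      exact PolyVanishAux.dir31 v w hv hw h hh h1 h2
  · constructor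
    · exact key2
    · rintro ⟨h, hh, h1, h2⟩
      exact PolyVanishAux.transfer v w (PolyVanishAux.dir31 v w hv hw h hh h1 h2)
end

section
/- Let σ be the Weierstrass sigma function of a lattice Ω = ℤω₁ + ℤω₂, with quasi-period map η : Ω → ℂ satisfying σ(z+ω) = ε(ω)σ(z)exp(η(ω)(z+ω/2)). If Re(ωη(ω)) ≤ 0 for all ω ∈ Ω, then σ has order of growth at most 1; since σ is a nonzero entire function of order 2 (it vanishes on the lattice Ω), there exists ω ∈ Ω with Re(ω η(ω)) > 0. -/
/-!
Quasi-periodicity gives `|σ(z₀ + ω)| = |σ(z₀)| exp(Re(η(ω) z₀) + Re(ω η(ω))/2)`. Comparing the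
quasi-periodicities of `ω`, `ω'` and `ω + ω'` on the open set where `σ ≠ 0` shows that `η` is
additive on the lattice, hence the restriction of an `ℝ`-linear map, so `|η(ω)| = O(|ω|)`. Writing
every `z` as `z₀ + ω` with `z₀` in a fixed compact set, the hypothesis `Re(ω η(ω)) ≤ 0` then
bounds `|σ(z)|` by `M exp(K |z|)`, i.e. `σ` has order at most `1`.
-/

open Complex

theorem mul_le_rpow_one_add_add {K e r : ℝ} (hK : 0 ≤ K) (he : 0 < e) (hr : 0 ≤ r) :
    K * r ≤ r ^ (1 + e) + K * K ^ e⁻¹ := by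
  rcases le_total r (K ^ e⁻¹) with hrR | hRr
  · nlinarith [Real.rpow_nonneg hr (1 + e)]
  · have hKr : K ≤ r ^ e := by
      simpa only [Real.rpow_inv_rpow hK he.ne'] using
        Real.rpow_le_rpow (Real.rpow_nonneg hK _) hRr he.le
    rw [Real.rpow_add' hr (by positivity), Real.rpow_one]
    nlinarith [Real.rpow_nonneg hK e⁻¹]

theorem exists_norm_le_mul_exp_rpow {E F : Type*} [SeminormedAddCommGroup E]
    [SeminormedAddCommGroup F] {f : E → F} {M K e : ℝ} (hK : 0 ≤ K) (he : 0 < e)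
    (hf : ∀ z, ‖f z‖ ≤ M * Real.exp (K * ‖z‖)) :
    ∃ C, ∀ z, ‖f z‖ ≤ C * Real.exp (‖z‖ ^ (1 + e)) := by
  refine ⟨M * Real.exp (K * K ^ e⁻¹), fun z => ?_⟩
  have hM : 0 ≤ M := nonneg_of_mul_nonneg_left ((norm_nonneg _).trans (hf z)) (Real.exp_pos _)
  calc ‖f z‖ ≤ M * Real.exp (K * ‖z‖) := hf z
    _ ≤ M * Real.exp (‖z‖ ^ (1 + e) + K * K ^ e⁻¹) := by
      gcongr; exact mul_le_rpow_one_add_add hK he (norm_nonneg z)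
    _ = M * Real.exp (K * K ^ e⁻¹) * Real.exp (‖z‖ ^ (1 + e)) := by
      rw [Real.exp_add]; ring

theorem eq_zero_of_exp_mul_add_eq {s : Set ℂ} {p q w : ℂ} (hs : IsOpen s) (hne : s.Nonempty)
    (h : ∀ z ∈ s, exp (p * z + q) = w) : p = 0 := by
  obtain ⟨z₀, hz₀⟩ := hne
  have hderiv : HasDerivAt (fun z => exp (p * z + q)) (exp (p * z₀ + q) * p) z₀ := by
    simpa using (((hasDerivAt_id z₀).const_mul p).add_const q).cexp
  have hconst : deriv (fun z => exp (p * z + q)) z₀ = 0 := by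
    rw [Filter.EventuallyEq.deriv_eq (Filter.eventually_of_mem (hs.mem_nhds hz₀) h), deriv_const]
  rw [hderiv.deriv] at hconst
  exact (mul_eq_zero.1 hconst).resolve_left (exp_ne_zero _)

def HasQuasiPeriod (σ : ℂ → ℂ) (ω c : ℂ) : Prop :=
  ∃ ε : ℂ, (ε = 1 ∨ ε = -1) ∧ ∀ z, σ (z + ω) = ε * σ z * exp (c * (z + ω / 2))

theorem HasQuasiPeriod.norm_apply_add {σ : ℂ → ℂ} {ω c : ℂ} (h : HasQuasiPeriod σ ω c) (z : ℂ) :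
    ‖σ (z + ω)‖ = ‖σ z‖ * Real.exp (c * (z + ω / 2)).re := by
  obtain ⟨ε, hε, hσ⟩ := h
  rcases hε with rfl | rfl <;> simp [hσ, norm_exp]

theorem HasQuasiPeriod.eq_add {σ : ℂ → ℂ} {ω ω' c c' c'' : ℂ} (hσ : Continuous σ) (hσ0 : σ ≠ 0)
    (h : HasQuasiPeriod σ ω c) (h' : HasQuasiPeriod σ ω' c')
    (h'' : HasQuasiPeriod σ (ω + ω') c'') : c'' = c + c' := by
  obtain ⟨ε, -, hω⟩ := h
  obtain ⟨ε', -, hω'⟩ := h'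
  obtain ⟨ε'', hε'', hωω'⟩ := h''
  have hε''0 : ε'' ≠ 0 := by rcases hε'' with rfl | rfl <;> norm_num
  suffices c'' - c - c' = 0 by linear_combination this
  refine eq_zero_of_exp_mul_add_eq (q := c'' * ((ω + ω') / 2) - c' * (ω' / 2) - c * (ω' + ω / 2))
    (w := ε * ε' / ε'') (hσ.isOpen_preimage _ isOpen_compl_singleton)
    (Function.ne_iff.1 hσ0) fun z (hz : σ z ≠ 0) => ?_
  have hsum := hωω' z
  rw [show z + (ω + ω') = z + ω' + ω by ring, hω, hω'] at hsum
  have hexp : (c'' - c - c') * z + (c'' * ((ω + ω') / 2) - c' * (ω' / 2) - c * (ω' + ω / 2)) =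
      c'' * (z + (ω + ω') / 2) - (c' * (z + ω' / 2) + c * (z + ω' + ω / 2)) := by ring
  rw [eq_div_iff hε''0, hexp, exp_sub, exp_add, div_mul_eq_mul_div,
    div_eq_iff (mul_ne_zero (exp_ne_zero _) (exp_ne_zero _))]
  apply mul_left_cancel₀ hz
  linear_combination -hsum

def latticePoints (ω₁ ω₂ : ℂ) : Set ℂ := {z | ∃ a b : ℤ, z = a * ω₁ + b * ω₂}

section Lattice

variable {ω₁ ω₂ : ℂ}

theorem add_mem_latticePoints {u v : ℂ} (hu : u ∈ latticePoints ω₁ ω₂)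
    (hv : v ∈ latticePoints ω₁ ω₂) : u + v ∈ latticePoints ω₁ ω₂ := by
  obtain ⟨a, b, rfl⟩ := hu
  obtain ⟨a', b', rfl⟩ := hv
  exact ⟨a + a', b + b', by push_cast; ring⟩

theorem exists_basis_coe_eq_of_linearIndependent (hindep : LinearIndependent ℝ ![ω₁, ω₂]) :
    ∃ B : Module.Basis (Fin 2) ℝ ℂ, ⇑B = ![ω₁, ω₂] :=
  ⟨_, coe_basisOfLinearIndependentOfCardEqFinrank hindep (by simp [finrank_real_complex])⟩

theorem exists_mem_latticePoints_norm_sub_le (hindep : LinearIndependent ℝ ![ω₁, ω₂]) (z : ℂ) :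
    ∃ ω ∈ latticePoints ω₁ ω₂, ‖z - ω‖ ≤ ‖ω₁‖ + ‖ω₂‖ := by
  obtain ⟨B, hB⟩ := exists_basis_coe_eq_of_linearIndependent hindep
  set s := B.repr z 0
  set t := B.repr z 1
  have hz : z = (s : ℂ) * ω₁ + (t : ℂ) * ω₂ := by
    conv_lhs => rw [← B.sum_repr z]
    simp [Fin.sum_univ_two, hB, s, t, real_smul]
  refine ⟨(⌊s⌋ : ℤ) * ω₁ + (⌊t⌋ : ℤ) * ω₂, ⟨⌊s⌋, ⌊t⌋, rfl⟩, ?_⟩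
  have hfract : z - ((⌊s⌋ : ℤ) * ω₁ + (⌊t⌋ : ℤ) * ω₂) = ((Int.fract s : ℝ) : ℂ) * ω₁ +
      ((Int.fract t : ℝ) : ℂ) * ω₂ := by
    rw [hz]
    unfold Int.fract
    push_cast
    ring
  rw [hfract]
  refine (norm_add_le _ _).trans ?_
  simp only [norm_mul, norm_real, Real.norm_of_nonneg (Int.fract_nonneg _)]
  gcongr <;> exact mul_le_of_le_one_left (norm_nonneg _) (Int.fract_lt_one _).le

theorem AddMonoidHom.apply_prod_int {E : Type*} [AddCommGroup E] (φ : ℤ × ℤ →+ E) (a b : ℤ) :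
    φ (a, b) = a • φ (1, 0) + b • φ (0, 1) := by
  rw [← map_zsmul, ← map_zsmul, ← map_add]
  simp

theorem exists_continuousLinearMap_eqOn_latticePoints {E : Type*} [NormedAddCommGroup E]
    [NormedSpace ℝ E] (hindep : LinearIndependent ℝ ![ω₁, ω₂]) {g : ℂ → E}
    (hg : ∀ u ∈ latticePoints ω₁ ω₂, ∀ v ∈ latticePoints ω₁ ω₂, g (u + v) = g u + g v) :
    ∃ ℓ : ℂ →L[ℝ] E, Set.EqOn g ℓ (latticePoints ω₁ ω₂) := by
  obtain ⟨B, hB⟩ := exists_basis_coe_eq_of_linearIndependent hindep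
  let φ : ℤ × ℤ →+ E := AddMonoidHom.mk' (fun p => g (p.1 * ω₁ + p.2 * ω₂)) fun p q => by
    rw [← hg _ ⟨p.1, p.2, rfl⟩ _ ⟨q.1, q.2, rfl⟩]
    congr 1
    simp only [Prod.fst_add, Prod.snd_add]
    push_cast
    ring
  refine ⟨LinearMap.toContinuousLinearMap (B.constr ℝ ![g ω₁, g ω₂]), ?_⟩
  rintro _ ⟨a, b, rfl⟩
  have hω₁ : B.constr ℝ ![g ω₁, g ω₂] ω₁ = g ω₁ := by
    simpa [hB] using B.constr_basis ℝ ![g ω₁, g ω₂] 0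
  have hω₂ : B.constr ℝ ![g ω₁, g ω₂] ω₂ = g ω₂ := by
    simpa [hB] using B.constr_basis ℝ ![g ω₁, g ω₂] 1
  have hφ := φ.apply_prod_int a b
  simp only [φ, AddMonoidHom.mk'_apply, Int.cast_one, Int.cast_zero, one_mul, zero_mul, add_zero,
    zero_add] at hφ
  have hpt : (a : ℂ) * ω₁ + (b : ℂ) * ω₂ = (a : ℝ) • ω₁ + (b : ℝ) • ω₂ := by simp [real_smul]
  rw [hφ, hpt, LinearMap.coe_toContinuousLinearMap', map_add, map_smul, map_smul, hω₁, hω₂,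
    Int.cast_smul_eq_zsmul, Int.cast_smul_eq_zsmul]

end Lattice

theorem exists_norm_le_mul_exp_of_hasQuasiPeriod {σ η : ℂ → ℂ} {S : Set ℂ} {D K : ℝ}
    (hσ : Continuous σ) (hK : 0 ≤ K) (hS : ∀ z, ∃ ω ∈ S, ‖z - ω‖ ≤ D)
    (hqp : ∀ ω ∈ S, HasQuasiPeriod σ ω (η ω)) (hη : ∀ ω ∈ S, ‖η ω‖ ≤ K * ‖ω‖)
    (hre : ∀ ω ∈ S, (ω * η ω).re ≤ 0) :
    ∃ M, ∀ z, ‖σ z‖ ≤ M * Real.exp (K * D * ‖z‖) := by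
  obtain ⟨M, hM⟩ :=
    (isCompact_closedBall (0 : ℂ) D).exists_bound_of_continuousOn hσ.continuousOn
  refine ⟨M * Real.exp (K * D * D), fun z => ?_⟩
  obtain ⟨ω, hω, hzω⟩ := hS z
  have hσ_le : ‖σ (z - ω)‖ ≤ M := hM _ (mem_closedBall_zero_iff.2 hzω)
  have hre_le : (η ω * (z - ω + ω / 2)).re ≤ K * D * D + K * D * ‖z‖ :=
    calc (η ω * (z - ω + ω / 2)).re = (η ω * (z - ω)).re + (ω * η ω).re / 2 := by
          rw [mul_add, add_re, mul_comm ω, mul_div_assoc']; simp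
      _ ≤ ‖η ω‖ * ‖z - ω‖ + 0 := by
          gcongr
          · exact (re_le_norm _).trans (norm_mul _ _).le
          · linarith [hre ω hω]
      _ ≤ K * (‖z‖ + D) * D := by
          have hD : 0 ≤ D := (norm_nonneg _).trans hzω
          have hω_le : ‖ω‖ ≤ ‖z‖ + D := by linarith [norm_le_insert' ω z, norm_sub_rev z ω]
          rw [add_zero]
          exact mul_le_mul ((hη ω hω).trans (by gcongr)) hzω (norm_nonneg _) (by positivity)
      _ = K * D * D + K * D * ‖z‖ := by ring
  calc ‖σ z‖ = ‖σ (z - ω)‖ * Real.exp (η ω * (z - ω + ω / 2)).re := by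
        simpa using (hqp ω hω).norm_apply_add (z - ω)
    _ ≤ M * Real.exp (K * D * D + K * D * ‖z‖) :=
        mul_le_mul hσ_le (Real.exp_le_exp.2 hre_le) (Real.exp_pos _).le
          ((norm_nonneg _).trans hσ_le)
    _ = M * Real.exp (K * D * D) * Real.exp (K * D * ‖z‖) := by rw [Real.exp_add]; ring

theorem exists_lattice_point_re_mul_eta_pos_general
    (ω₁ ω₂ : ℂ) (hindep : LinearIndependent ℝ ![ω₁, ω₂])
    (σ η : ℂ → ℂ) (hσ : Differentiable ℂ σ) (hσ0 : σ ≠ 0)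
    (hqp : ∀ ω ∈ {z : ℂ | ∃ a b : ℤ, z = a * ω₁ + b * ω₂},
      ∃ ε : ℂ, (ε = 1 ∨ ε = -1) ∧
        ∀ z, σ (z + ω) = ε * σ z * Complex.exp (η ω * (z + ω / 2)))
    (horder : ¬ ∀ e : ℝ, 0 < e → ∃ C : ℝ,
      ∀ z : ℂ, ‖σ z‖ ≤ C * Real.exp (‖z‖ ^ (1 + e))) :
    ∃ ω ∈ {z : ℂ | ∃ a b : ℤ, z = a * ω₁ + b * ω₂}, 0 < (ω * η ω).re := by
  by_contra! hre
  obtain ⟨ℓ, hℓ⟩ := exists_continuousLinearMap_eqOn_latticePoints hindep (g := η)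
    fun u hu v hv => HasQuasiPeriod.eq_add hσ.continuous hσ0 (hqp u hu) (hqp v hv)
      (hqp _ (add_mem_latticePoints hu hv))
  obtain ⟨M, hM⟩ := exists_norm_le_mul_exp_of_hasQuasiPeriod hσ.continuous (norm_nonneg ℓ)
    (exists_mem_latticePoints_norm_sub_le hindep) hqp
    (fun ω hω => hℓ hω ▸ ℓ.le_opNorm ω) hre
  exact horder fun e he => exists_norm_le_mul_exp_rpow (by positivity) he hM

/-- For the Weierstrass sigma function of a lattice `Ω = ℤω₁ + ℤω₂`, with
quasi-periodicity `σ(z+ω) = ε(ω)σ(z)exp(η(ω)(z+ω/2))` (`ε(ω) = ±1`): if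
`Re(ωη(ω)) ≤ 0` for all `ω ∈ Ω` then `σ` has order of growth at most `1`;
since `σ` has order `2` (here: `σ` is entire but does not have order `≤ 1`),
there exists `ω ∈ Ω` with `Re(ωη(ω)) > 0`. -/
theorem exists_lattice_point_re_mul_eta_pos
    (ω₁ ω₂ : ℂ) (hindep : LinearIndependent ℝ ![ω₁, ω₂])
    (σ η : ℂ → ℂ) (hσ : Differentiable ℂ σ) (hσ0 : σ ≠ 0)
    (hzero : ∀ ω ∈ {z : ℂ | ∃ a b : ℤ, z = a * ω₁ + b * ω₂}, σ ω = 0)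
    (hqp : ∀ ω ∈ {z : ℂ | ∃ a b : ℤ, z = a * ω₁ + b * ω₂},
      ∃ ε : ℂ, (ε = 1 ∨ ε = -1) ∧
        ∀ z, σ (z + ω) = ε * σ z * Complex.exp (η ω * (z + ω / 2)))
    (horder : ¬ ∀ e : ℝ, 0 < e → ∃ C : ℝ,
      ∀ z : ℂ, ‖σ z‖ ≤ C * Real.exp (‖z‖ ^ (1 + e))) :
    ∃ ω ∈ {z : ℂ | ∃ a b : ℤ, z = a * ω₁ + b * ω₂}, 0 < (ω * η ω).re :=
  exists_lattice_point_re_mul_eta_pos_general ω₁ ω₂ hindep σ η hσ hσ0 hqp horder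
end

section
/- Define q₀ = 1 and q_{k+1} = 3^{q_k^4}. For signs ε_ℓ ∈ {−1,+1} and fixed integers n ≥ 1, 1 ≤ i ≤ n, set x = ∑_{ℓ=1}^∞ ε_ℓ (4(ℓ−1))^{n−i} / q_ℓ. Then x converges, and for all sufficiently large k, letting p_k = q_k ∑_{ℓ=1}^k ε_ℓ (4(ℓ−1))^{n−i}/q_ℓ ∈ ℤ, one has (4k)^{n−i} q_k / (2 q_{k+1}) ≤ |q_k x − p_k| ≤ 2 (4k)^{n−i} q_k / q_{k+1}. -/
/-!
The `k`-th term `±(4k)^m / q_{k+1}` (where `m = n - i`) dominates the tail of the series: since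
`q_{k+2} = 3^{q_{k+1}^4}` is astronomically larger than `q_{k+1}`, consecutive terms shrink
eventually by a factor `1/3`, so the tail after the `k`-th term is at most half of it.
Moreover `q_{ℓ+1} ∣ q_k` for `ℓ < k`, so `p_k` is an integer.
-/

open Finset

theorem norm_tsum_sub_le_of_ratio {E : Type*} [NormedAddCommGroup E] [CompleteSpace E]
    {f : ℕ → E} {r : ℝ} (hr₀ : 0 ≤ r) (hr₁ : r < 1) (h : ∀ j, ‖f (j + 1)‖ ≤ r * ‖f j‖) :
    ‖∑' j, f j - f 0‖ ≤ r / (1 - r) * ‖f 0‖ := by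
  have hf : Summable f :=
    summable_of_ratio_norm_eventually_le hr₁ (Filter.Eventually.of_forall h)
  have hgeom : HasSum (fun j => r ^ j * (r * ‖f 0‖)) (r / (1 - r) * ‖f 0‖) := by
    rw [show r / (1 - r) * ‖f 0‖ = (1 - r)⁻¹ * (r * ‖f 0‖) by ring]
    exact (hasSum_geometric_of_lt_one hr₀ hr₁).mul_right _
  rw [hf.tsum_eq_zero_add, add_sub_cancel_left]
  refine tsum_of_norm_bounded hgeom fun j => ?_
  calc ‖f (j + 1)‖ ≤ r ^ (j + 1) * ‖f 0‖ := le_geom (u := fun j => ‖f j‖) hr₀ _ fun k _ => h k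
    _ = r ^ j * (r * ‖f 0‖) := by ring

namespace Nat

theorem lt_three_pow_pow_four (x : ℕ) : x < 3 ^ (x ^ 4) :=
  lt_of_lt_of_le (Nat.lt_pow_self (by norm_num))
    (Nat.pow_le_pow_right (by norm_num) (Nat.le_self_pow (by norm_num) x))

theorem mul_le_three_pow_pow_four {c x : ℕ} (hc : c ≤ 3 ^ x) : c * x ≤ 3 ^ (x ^ 4) := by
  rcases Nat.lt_or_ge x 2 with hx | hx
  · interval_cases x <;> simp_all
  · calc c * x ≤ 3 ^ x * 3 ^ x := Nat.mul_le_mul hc (Nat.lt_pow_self (by norm_num)).le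
      _ = 3 ^ (x + x) := (pow_add 3 x x).symm
      _ ≤ 3 ^ (x ^ 4) := Nat.pow_le_pow_right (by norm_num)
        (by nlinarith [Nat.pow_le_pow_right (by omega : 1 ≤ x) (by norm_num : 2 ≤ 4)])

end Nat

namespace LiouvilleType

noncomputable def term (q : ℕ → ℕ) (ε : ℕ → ℝ) (m ℓ : ℕ) : ℝ :=
  ε (ℓ + 1) * (4 * ℓ : ℝ) ^ m / q (ℓ + 1)

def IsTower (q : ℕ → ℕ) : Prop := ∀ k, q (k + 1) = 3 ^ (q k ^ 4)

variable {q : ℕ → ℕ} {ε : ℕ → ℝ}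

theorem IsTower.strictMono (hq : IsTower q) : StrictMono q :=
  strictMono_nat_of_lt_succ fun k => hq k ▸ Nat.lt_three_pow_pow_four (q k)

theorem IsTower.le_self (hq : IsTower q) (k : ℕ) : k ≤ q k := hq.strictMono.id_le k

theorem IsTower.succ_pos (hq : IsTower q) (k : ℕ) : 0 < q (k + 1) := by
  rw [hq]; positivity

theorem IsTower.mul_le_succ (hq : IsTower q) {c k : ℕ} (hc : c ≤ 3 ^ k) :
    c * q k ≤ q (k + 1) :=
  hq k ▸ Nat.mul_le_three_pow_pow_four
    (hc.trans (Nat.pow_le_pow_right (by norm_num) (hq.le_self k)))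

theorem IsTower.succ_dvd_succ (hq : IsTower q) {j k : ℕ} (hjk : j ≤ k) :
    q (j + 1) ∣ q (k + 1) := by
  rw [hq, hq]
  exact pow_dvd_pow 3 (Nat.pow_le_pow_left (hq.strictMono.monotone hjk) 4)

theorem abs_term (hε : ∀ ℓ, |ε ℓ| = 1) (m ℓ : ℕ) :
    |term q ε m ℓ| = (4 * ℓ : ℝ) ^ m / q (ℓ + 1) := by
  rw [term, abs_div, abs_mul, hε, one_mul, Nat.abs_cast, abs_of_nonneg (by positivity)]

theorem IsTower.abs_term_succ_le (hq : IsTower q) (hε : ∀ ℓ, |ε ℓ| = 1) {m ℓ : ℕ}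
    (hℓ : m + 1 ≤ ℓ) :
    |term q ε m (ℓ + 1)| ≤ 3⁻¹ * |term q ε m ℓ| := by
  have hgrowth : ((3 * 2 ^ m : ℕ) : ℝ) * q (ℓ + 1) ≤ q (ℓ + 1 + 1) := by
    refine mod_cast hq.mul_le_succ ?_
    calc 3 * 2 ^ m ≤ 3 * 3 ^ m := by gcongr; norm_num
      _ = 3 ^ (m + 1) := by ring
      _ ≤ 3 ^ (ℓ + 1) := Nat.pow_le_pow_right (by norm_num) (by omega)
  have hq₀ : (0 : ℝ) < q (ℓ + 1) := mod_cast hq.succ_pos ℓ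
  have hℓ₁ : (ℓ : ℝ) + 1 ≤ 2 * ℓ := by
    have : (1 : ℝ) ≤ ℓ := mod_cast (by omega : 1 ≤ ℓ)
    linarith
  have hnum : (4 * ((ℓ + 1 : ℕ) : ℝ)) ^ m ≤ 2 ^ m * (4 * ℓ) ^ m := by
    rw [← mul_pow]
    refine pow_le_pow_left₀ (by positivity) ?_ m
    push_cast
    linarith
  rw [abs_term hε, abs_term hε]
  calc (4 * ((ℓ + 1 : ℕ) : ℝ)) ^ m / q (ℓ + 1 + 1)
      ≤ (2 ^ m * (4 * ℓ) ^ m) / ((3 * 2 ^ m : ℕ) * q (ℓ + 1)) :=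
        div_le_div₀ (by positivity) hnum (by positivity) hgrowth
    _ = 3⁻¹ * ((4 * ℓ : ℝ) ^ m / q (ℓ + 1)) := by
        push_cast
        field_simp

theorem IsTower.summable_term (hq : IsTower q) (hε : ∀ ℓ, |ε ℓ| = 1) (m : ℕ) :
    Summable (term q ε m) :=
  summable_of_ratio_norm_eventually_le (by norm_num : (3 : ℝ)⁻¹ < 1)
    (Filter.eventually_atTop.2 ⟨m + 1, fun _ hℓ => hq.abs_term_succ_le hε hℓ⟩)

theorem IsTower.exists_int_eq_mul_sum_term (hq : IsTower q) (hε : ∀ ℓ, ∃ z : ℤ, ε ℓ = z)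
    (m k : ℕ) :
    ∃ P : ℤ, (q k : ℝ) * ∑ ℓ ∈ range k, term q ε m ℓ = P := by
  choose e he using hε
  refine ⟨∑ ℓ ∈ range k, e (ℓ + 1) * (4 * ℓ) ^ m * ((q k / q (ℓ + 1) : ℕ) : ℤ), ?_⟩
  rw [mul_sum, Int.cast_sum]
  refine sum_congr rfl fun ℓ hℓ => ?_
  obtain ⟨j, rfl⟩ : ∃ j, k = j + 1 := ⟨k - 1, by have := mem_range.1 hℓ; omega⟩
  have hdiv : ((q (j + 1) / q (ℓ + 1) : ℕ) : ℝ) = q (j + 1) / q (ℓ + 1) :=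
    Nat.cast_div (hq.succ_dvd_succ (by have := mem_range.1 hℓ; omega))
      (mod_cast (hq.succ_pos ℓ).ne')
  simp only [term, he, Int.cast_mul, Int.cast_pow, Int.cast_natCast, Int.cast_ofNat, hdiv]
  ring

theorem IsTower.abs_tsum_term_tail_mem_Icc (hq : IsTower q) (hε : ∀ ℓ, |ε ℓ| = 1) {m k : ℕ}
    (hk : m + 1 ≤ k) :
    |∑' j, term q ε m (j + k)| ∈ Set.Icc (|term q ε m k| / 2) (3 / 2 * |term q ε m k|) := by
  have htail := norm_tsum_sub_le_of_ratio (f := fun j => term q ε m (j + k))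
    (by norm_num) (by norm_num : (3 : ℝ)⁻¹ < 1)
    fun j => by
      simpa only [Real.norm_eq_abs, add_right_comm j 1 k] using
        hq.abs_term_succ_le hε (ℓ := j + k) (by omega)
  simp only [Real.norm_eq_abs, zero_add] at htail
  constructor <;>
    linarith [abs_sub_abs_le_abs_sub (∑' j, term q ε m (j + k)) (term q ε m k),
      abs_sub_abs_le_abs_sub (term q ε m k) (∑' j, term q ε m (j + k)),
      abs_sub_comm (∑' j, term q ε m (j + k)) (term q ε m k)]

end LiouvilleType

theorem liouville_type_approximation_general (q : ℕ → ℕ)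
    (hq : ∀ k, q (k + 1) = 3 ^ (q k ^ 4))
    (ε : ℕ → ℝ) (hε : ∀ ℓ, ε ℓ = 1 ∨ ε ℓ = -1)
    (n i : ℕ) :
    let f : ℕ → ℝ := fun ℓ => ε (ℓ + 1) * ((4 * ℓ : ℝ)) ^ (n - i) / q (ℓ + 1)
    let x : ℝ := ∑' ℓ : ℕ, f ℓ
    let p : ℕ → ℝ := fun k => (q k : ℝ) * ∑ ℓ ∈ Finset.range k, f ℓ
    Summable f ∧ ∃ K : ℕ, ∀ k ≥ K,
      (∃ P : ℤ, p k = (P : ℝ)) ∧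
      (4 * k : ℝ) ^ (n - i) * q k / (2 * q (k + 1)) ≤ |(q k : ℝ) * x - p k| ∧
      |(q k : ℝ) * x - p k| ≤ 2 * (4 * k : ℝ) ^ (n - i) * q k / q (k + 1) := by
  intro f x p
  have hf : f = LiouvilleType.term q ε (n - i) := rfl
  have habs : ∀ ℓ, |ε ℓ| = 1 := fun ℓ => by rcases hε ℓ with h | h <;> simp [h]
  have hint : ∀ ℓ, ∃ z : ℤ, ε ℓ = z := fun ℓ => by
    rcases hε ℓ with h | h
    exacts [⟨1, by simp [h]⟩, ⟨-1, by simp [h]⟩]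
  have htower : LiouvilleType.IsTower q := hq
  have hsum : Summable f := htower.summable_term habs (n - i)
  refine ⟨hsum, n - i + 1, fun k hk => ⟨htower.exists_int_eq_mul_sum_term hint _ k, ?_⟩⟩
  have hqk : (0 : ℝ) ≤ q k := Nat.cast_nonneg _
  have hdiff : (q k : ℝ) * x - p k = q k * ∑' j, f (j + k) := by
    simp only [x, p, ← hsum.sum_add_tsum_nat_add k]
    ring
  have hfk : (4 * k : ℝ) ^ (n - i) / q (k + 1) = |f k| :=
    (LiouvilleType.abs_term habs _ k).symm
  obtain ⟨hlow, hup⟩ := htower.abs_tsum_term_tail_mem_Icc habs hk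
  rw [← hf] at hlow hup
  have hlow_eq : (4 * k : ℝ) ^ (n - i) * q k / (2 * q (k + 1)) = q k * (|f k| / 2) := by
    rw [← hfk]; ring
  have hup_eq : 2 * (4 * k : ℝ) ^ (n - i) * q k / q (k + 1) = q k * (2 * |f k|) := by
    rw [← hfk]; ring
  rw [hdiff, abs_mul, Nat.abs_cast, hlow_eq, hup_eq]
  exact ⟨mul_le_mul_of_nonneg_left hlow hqk,
    mul_le_mul_of_nonneg_left (hup.trans (by linarith [abs_nonneg (f k)])) hqk⟩

/-- With `q₀ = 1`, `q_{k+1} = 3^{q_k⁴}` and signs `ε_ℓ = ±1`, the series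
`x = ∑_{ℓ≥1} ε_ℓ (4(ℓ−1))^{n−i}/q_ℓ` converges, and for all sufficiently
large `k`, the partial sum `p_k = q_k ∑_{ℓ=1}^k ε_ℓ (4(ℓ−1))^{n−i}/q_ℓ` is an
integer and `(4k)^{n−i} q_k/(2q_{k+1}) ≤ |q_k x − p_k| ≤ 2(4k)^{n−i} q_k/q_{k+1}`. -/
theorem liouville_type_approximation (q : ℕ → ℕ) (hq0 : q 0 = 1)
    (hq : ∀ k, q (k + 1) = 3 ^ (q k ^ 4))
    (ε : ℕ → ℝ) (hε : ∀ ℓ, ε ℓ = 1 ∨ ε ℓ = -1)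
    (n i : ℕ) (hn : 1 ≤ n) (hi1 : 1 ≤ i) (hin : i ≤ n) :
    let f : ℕ → ℝ := fun ℓ => ε (ℓ + 1) * ((4 * ℓ : ℝ)) ^ (n - i) / q (ℓ + 1)
    let x : ℝ := ∑' ℓ : ℕ, f ℓ
    let p : ℕ → ℝ := fun k => (q k : ℝ) * ∑ ℓ ∈ Finset.range k, f ℓ
    Summable f ∧ ∃ K : ℕ, ∀ k ≥ K,
      (∃ P : ℤ, p k = (P : ℝ)) ∧
      (4 * k : ℝ) ^ (n - i) * q k / (2 * q (k + 1)) ≤ |(q k : ℝ) * x - p k| ∧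
      |(q k : ℝ) * x - p k| ≤ 2 * (4 * k : ℝ) ^ (n - i) * q k / q (k + 1) :=
  liouville_type_approximation_general q hq ε hε n i
end

section
/- Let x₁,…,x_n be real numbers that are linearly independent over ℚ, and let f ∈ ℤ[X₁,…,X_n,Y₁,…,Y_n] be a polynomial with all partial degrees at most L. Suppose (q_k) is a sequence of positive integers and p_{k,i} are integers with q_k x_i − p_{k,i} → 0 as k → ∞ for each i. Then for all sufficiently large k, the exponents p_{k,1}m₁ + ⋯ + p_{k,n}m_n, as (m₁,…,m_n) ranges over {0,…,L}ⁿ, are pairwise distinct. -/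
open Finset Filter

/-- If `x₁,…,x_n` are real numbers linearly independent over `ℚ`,
`f` has partial degrees `≤ L`, and `p_{k,i}` are integer approximations with
`q_k x_i − p_{k,i} → 0`, then for all sufficiently large `k` the exponents
`p_{k,1}m₁ + ⋯ + p_{k,n}m_n`, for `(m₁,…,m_n) ∈ {0,…,L}ⁿ`, are pairwise
distinct. -/
theorem exponents_pairwise_distinct (n : ℕ) (x : Fin n → ℝ)
    (hx : LinearIndependent ℚ x)
    (f : MvPolynomial (Fin n ⊕ Fin n) ℤ) (L : ℕ)
    (hdeg : ∀ v, MvPolynomial.degreeOf v f ≤ L)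
    (q : ℕ → ℕ) (hq : ∀ k, 0 < q k) (p : ℕ → Fin n → ℤ)
    (happrox : ∀ i, Tendsto (fun k => (q k : ℝ) * x i - (p k i : ℝ))
      atTop (nhds 0)) :
    ∃ K : ℕ, ∀ k ≥ K, Function.Injective
      (fun m : Fin n → Fin (L + 1) => ∑ i : Fin n, p k i * ((m i : ℕ) : ℤ)) := by
  have key : ∀ a : Fin n → ℤ, (∃ i, a i ≠ 0) →
      ∀ᶠ k in atTop, (∑ i, a i * p k i) ≠ 0 := by
    intro a ha
    have hr : (∑ i, (a i : ℝ) * x i) ≠ 0 := by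
      intro h0
      obtain ⟨i, hi⟩ := ha
      have h1 : ∑ i, (fun i => (a i : ℚ)) i • x i = 0 := by
        simpa [Rat.smul_def] using h0
      have := Fintype.linearIndependent_iff.mp hx (fun i => (a i : ℚ)) h1 i
      exact hi (by exact_mod_cast this)
    set r : ℝ := ∑ i, (a i : ℝ) * x i with hrdef
    have he : Tendsto (fun k => ∑ i, (a i : ℝ) * ((q k : ℝ) * x i - p k i))
        atTop (nhds 0) := by
      have : Tendsto (fun k => ∑ i, (a i : ℝ) * ((q k : ℝ) * x i - p k i))
          atTop (nhds (∑ i : Fin n, (a i : ℝ) * 0)) :=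
        tendsto_finset_sum _ fun i _ => (happrox i).const_mul _
      simpa using this
    have habs : ∀ᶠ k in atTop,
        |∑ i, (a i : ℝ) * ((q k : ℝ) * x i - p k i)| < |r| := by
      have := he.abs
      simp only [abs_zero] at this
      exact this.eventually_lt_const (abs_pos.mpr hr)
    filter_upwards [habs] with k hk hzero
    have hcast : ((∑ i, a i * p k i : ℤ) : ℝ) = 0 := by rw [hzero]; simp
    have hsum : ∑ i, (a i : ℝ) * ((q k : ℝ) * x i - p k i) = (q k : ℝ) * r := by
      push_cast at hcast
      have step : ∑ i, (a i : ℝ) * ((q k : ℝ) * x i - p k i)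
          = (q k : ℝ) * r - ∑ i, (a i : ℝ) * (p k i : ℝ) := by
        rw [hrdef, Finset.mul_sum, ← Finset.sum_sub_distrib]
        exact Finset.sum_congr rfl fun i _ => by ring
      rw [step, hcast, sub_zero]
    rw [hsum] at hk
    rw [abs_mul] at hk
    have hq1 : (1 : ℝ) ≤ |(q k : ℝ)| := by
      rw [abs_of_nonneg (by positivity)]
      exact_mod_cast hq k
    nlinarith [abs_pos.mpr hr]
  have hall : ∀ᶠ k in atTop, ∀ mm : (Fin n → Fin (L + 1)) × (Fin n → Fin (L + 1)),
      (∑ i : Fin n, p k i * ((mm.1 i : ℕ) : ℤ)) = (∑ i : Fin n, p k i * ((mm.2 i : ℕ) : ℤ))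
      → mm.1 = mm.2 := by
    rw [Filter.eventually_all]
    rintro ⟨m, m'⟩
    by_cases hmm : m = m'
    · exact Filter.Eventually.of_forall fun k _ => hmm
    · have hne : ∃ i, ((m i : ℕ) : ℤ) - ((m' i : ℕ) : ℤ) ≠ 0 := by
        obtain ⟨i, hi⟩ := Function.ne_iff.mp hmm
        refine ⟨i, sub_ne_zero.mpr ?_⟩
        exact_mod_cast fun h => hi (Fin.ext (by exact_mod_cast h))
      filter_upwards [key _ hne] with k hk heq
      exfalso
      apply hk
      rw [← sub_eq_zero] at heq
      rw [← heq, ← Finset.sum_sub_distrib]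
      apply Finset.sum_congr rfl
      intro i _
      ring
  obtain ⟨K, hK⟩ := eventually_atTop.mp hall
  exact ⟨K, fun k hk m m' h => hK k hk (m, m') h⟩
end
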